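/- arXiv:1705.01433 — 3 statements merged into one kernel-verified Lean document; each statement's English description precedes it below -/
import Mathlib

section
/- Consider a Richman game and a vertex v. For every t ∈ ℕ, if Player 1's initial budget exceeds R(v, t), then Player 1 has a strategy that guarantees that the outcome reaches his target v_R within at most t rounds, regardless of Player 2's strategy. -/
open scoped Classical

/-! ### Bidding games: the basic model -/

/-- One round of a bidding game: the vertex the token was moved to, the winning bid,
and whether Player 1 won the bidding. -/
structure BidRound (V : Type) where
  dest : V
  bid : ℝ
  p1Won : Bool

/-- A history: the initial vertex together with the list of rounds played so far. -/
structure Hist (V : Type) where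
  init : V
  rounds : List (BidRound V)

/-- The vertex currently occupied by the token. -/
def Hist.cur {V : Type} (h : Hist V) : V :=
  h.rounds.getLast?.elim h.init BidRound.dest

/-- The net payment of Player 1 so far (bids paid upon winning minus bids received). -/
def Hist.pay1 {V : Type} (h : Hist V) : ℝ :=
  (h.rounds.map (fun r => if r.p1Won then r.bid else -r.bid)).sum

/-- The net payment of Player 2 so far. -/
def Hist.pay2 {V : Type} (h : Hist V) : ℝ := -h.pay1

/-- The sum of the weights of all vertices visited so far (including the current one). -/
def Hist.energyAll {V : Type} (w : V → ℤ) (h : Hist V) : ℤ :=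
  w h.init + (h.rounds.map (fun r => w r.dest)).sum

/-- A strategy: maps a history to a bid and the vertex to move to upon winning. -/
def Strat (V : Type) := Hist V → ℝ × V

/-- A tie-breaking mechanism: decides at each history whether Player 1 wins a tie. -/
def TieBreak (V : Type) := Hist V → Bool

/-- A bidding game: a finite directed graph in which every vertex has an outgoing edge. -/
structure BiddingGame (V : Type) [Fintype V] where
  E : V → V → Prop
  total : ∀ v, ∃ u, E v u

/-- One round of play: both players bid; the higher bidder (Player 1 upon a tie won by
the tie-breaking mechanism) pays his bid to the other player and moves the token. -/
noncomputable def extend {V : Type} (tb : TieBreak V) (f1 f2 : Strat V) (h : Hist V) : Hist V :=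
  if (f2 h).1 < (f1 h).1 ∨ ((f1 h).1 = (f2 h).1 ∧ tb h = true) then
    ⟨h.init, h.rounds ++ [⟨(f1 h).2, (f1 h).1, true⟩]⟩
  else
    ⟨h.init, h.rounds ++ [⟨(f2 h).2, (f2 h).1, false⟩]⟩

/-- The history after `n` rounds, starting at `v0`. -/
noncomputable def play {V : Type} (tb : TieBreak V) (f1 f2 : Strat V) (v0 : V) : ℕ → Hist V
  | 0 => ⟨v0, []⟩
  | n + 1 => extend tb f1 f2 (play tb f1 f2 v0 n)

/-- The vertex occupied after `n` rounds. -/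
noncomputable def visit {V : Type} (tb : TieBreak V) (f1 f2 : Strat V) (v0 : V) (n : ℕ) : V :=
  (play tb f1 f2 v0 n).cur

/-- The energy (sum of weights) of the prefix of length `n` of the outcome. -/
noncomputable def energy {V : Type} (w : V → ℤ) (tb : TieBreak V) (f1 f2 : Strat V) (v0 : V)
    (n : ℕ) : ℤ :=
  ∑ i ∈ Finset.range n, w (visit tb f1 f2 v0 i)

/-- Player 1's strategy is legal w.r.t. the initial budget `B`: along any play, his bids
are nonnegative, never exceed his current budget, and his moves follow edges. -/
def Legal1 {V : Type} [Fintype V] (G : BiddingGame V) (f1 : Strat V) (B : ℝ) : Prop :=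
  ∀ (tb : TieBreak V) (f2 : Strat V) (v0 : V) (n : ℕ),
    0 ≤ (f1 (play tb f1 f2 v0 n)).1 ∧
    (f1 (play tb f1 f2 v0 n)).1 ≤ B - (play tb f1 f2 v0 n).pay1 ∧
    G.E (play tb f1 f2 v0 n).cur (f1 (play tb f1 f2 v0 n)).2

/-- Player 2's strategy is legal w.r.t. the initial budget `B`. -/
def Legal2 {V : Type} [Fintype V] (G : BiddingGame V) (f2 : Strat V) (B : ℝ) : Prop :=
  ∀ (tb : TieBreak V) (f1 : Strat V) (v0 : V) (n : ℕ),
    0 ≤ (f2 (play tb f1 f2 v0 n)).1 ∧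
    (f2 (play tb f1 f2 v0 n)).1 ≤ B - (play tb f1 f2 v0 n).pay2 ∧
    G.E (play tb f1 f2 v0 n).cur (f2 (play tb f1 f2 v0 n)).2

/-- A memoryless strategy: its action depends only on the current vertex and the
player's current budget (equivalently, the net payments so far). -/
def Memoryless {V : Type} (f : Strat V) : Prop :=
  ∀ h h' : Hist V, h.cur = h'.cur → h.pay1 = h'.pay1 → f h = f h'

/-- A memoryless strategy in a mean-payoff game: its action depends only on the current
vertex, the player's current budget, and the current energy level. -/
def MemorylessE {V : Type} (w : V → ℤ) (f : Strat V) : Prop :=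
  ∀ h h' : Hist V, h.cur = h'.cur → h.pay1 = h'.pay1 →
    h.energyAll w = h'.energyAll w → f h = f h'

/-- A constant-memory strategy for Player 2 (Max): the action depends only on the current
vertex, Player 2's current budget, the current energy level, and a memory state ranging
over a finite set (of size independent of the history), updated round by round. -/
def FiniteMemory2 {V : Type} (w : V → ℤ) (f : Strat V) (B : ℝ) : Prop :=
  ∃ (M : Type) (_ : Fintype M) (m0 : M) (upd : M → BidRound V → M)
    (act : V → ℝ → ℤ → M → ℝ × V),
    ∀ h : Hist V, f h = act h.cur (B - h.pay2) (h.energyAll w) (h.rounds.foldl upd m0)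

/-- Strong connectivity of the arena. -/
def StronglyConnected {V : Type} [Fintype V] (G : BiddingGame V) : Prop :=
  ∀ v u : V, Relation.ReflTransGen G.E v u

/-! ### Richman games -/

/-- The successors of `v`. -/
noncomputable def BiddingGame.adj {V : Type} [Fintype V] (G : BiddingGame V) (v : V) :
    Finset V :=
  Finset.univ.filter (fun u => G.E v u)

lemma BiddingGame.adj_nonempty {V : Type} [Fintype V] (G : BiddingGame V) (v : V) :
    (G.adj v).Nonempty := by
  obtain ⟨u, hu⟩ := G.total v
  exact ⟨u, by simpa [BiddingGame.adj] using hu⟩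

/-- The Richman function `R(v, i)`. -/
noncomputable def Rfun {V : Type} [Fintype V] (G : BiddingGame V) (vR vS : V) :
    ℕ → V → ℝ
  | 0, v => if v = vR then 0 else 1
  | i + 1, v =>
      if v = vR then 0
      else if v = vS then 1
      else ((G.adj v).sup' (G.adj_nonempty v) (Rfun G vR vS i) +
            (G.adj v).inf' (G.adj_nonempty v) (Rfun G vR vS i)) / 2

/-- The limit Richman function `R(v) = lim_i R(v, i)`; since `i ↦ R(v, i)` is
nonincreasing, the limit equals the infimum. -/
noncomputable def Rlim {V : Type} [Fintype V] (G : BiddingGame V) (vR vS : V)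
    (v : V) : ℝ :=
  ⨅ i : ℕ, Rfun G vR vS i v

/-- Player 1 wins an outcome of a Richman game: `vR` is reached, and `vS` is not
reached before that (the game ends once a target is reached). -/
def Win1Richman {V : Type} (tb : TieBreak V) (f1 f2 : Strat V) (v0 vR vS : V) : Prop :=
  ∃ n, visit tb f1 f2 v0 n = vR ∧ ∀ m < n, visit tb f1 f2 v0 m ≠ vS

/-- Player 2 wins an outcome of a Richman game: `vS` is reached first, or no target is
ever reached. -/
def Win2Richman {V : Type} (tb : TieBreak V) (f1 f2 : Strat V) (v0 vR vS : V) : Prop :=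
  (∃ n, visit tb f1 f2 v0 n = vS ∧ ∀ m < n, visit tb f1 f2 v0 m ≠ vR) ∨
  (∀ n, visit tb f1 f2 v0 n ≠ vR ∧ visit tb f1 f2 v0 n ≠ vS)

/-- Player 1 has a winning strategy in the Richman game from `v0` with budget `B`. -/
def Win1RichmanFrom {V : Type} [Fintype V] (G : BiddingGame V) (vR vS v0 : V)
    (B : ℝ) : Prop :=
  ∀ tb : TieBreak V, ∃ f1 : Strat V, Legal1 G f1 B ∧
    ∀ f2 : Strat V, Legal2 G f2 (1 - B) → Win1Richman tb f1 f2 v0 vR vS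

/-- Player 2 has a winning strategy in the Richman game from `v0` with budget `B`. -/
def Win2RichmanFrom {V : Type} [Fintype V] (G : BiddingGame V) (vR vS v0 : V)
    (B : ℝ) : Prop :=
  ∀ tb : TieBreak V, ∃ f2 : Strat V, Legal2 G f2 B ∧
    ∀ f1 : Strat V, Legal1 G f1 (1 - B) → Win2Richman tb f1 f2 v0 vR vS

/-- `t` is a threshold budget at `v` in the Richman game. -/
def IsThreshRichman {V : Type} [Fintype V] (G : BiddingGame V) (vR vS v : V)
    (t : ℝ) : Prop :=
  (∀ B : ℝ, B ≤ 1 → t < B → Win1RichmanFrom G vR vS v B) ∧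
  (∀ B : ℝ, B ≤ 1 → 1 - t < B → Win2RichmanFrom G vR vS v B)

/-! ### Richman games with target sets -/

def Win1RichmanSet {V : Type} (tb : TieBreak V) (f1 f2 : Strat V) (v0 : V)
    (R S : Set V) : Prop :=
  ∃ n, visit tb f1 f2 v0 n ∈ R ∧ ∀ m < n, visit tb f1 f2 v0 m ∉ S

def Win2RichmanSet {V : Type} (tb : TieBreak V) (f1 f2 : Strat V) (v0 : V)
    (R S : Set V) : Prop :=
  (∃ n, visit tb f1 f2 v0 n ∈ S ∧ ∀ m < n, visit tb f1 f2 v0 m ∉ R) ∨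
  (∀ n, visit tb f1 f2 v0 n ∉ R ∧ visit tb f1 f2 v0 n ∉ S)

/-- `t` is a threshold budget at `v` in the Richman game with target sets `R` and `S`. -/
def IsThreshRichmanSet {V : Type} [Fintype V] (G : BiddingGame V) (R S : Set V)
    (v : V) (t : ℝ) : Prop :=
  (∀ B : ℝ, B ≤ 1 → t < B → ∀ tb : TieBreak V, ∃ f1 : Strat V, Legal1 G f1 B ∧
      ∀ f2 : Strat V, Legal2 G f2 (1 - B) → Win1RichmanSet tb f1 f2 v R S) ∧
  (∀ B : ℝ, B ≤ 1 → 1 - t < B → ∀ tb : TieBreak V, ∃ f2 : Strat V, Legal2 G f2 B ∧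
      ∀ f1 : Strat V, Legal1 G f1 (1 - B) → Win2RichmanSet tb f1 f2 v R S)

/-! ### Reachability games -/

/-- `t` is a threshold budget at `v` in the reachability game with target set `T`. -/
def IsThreshReach {V : Type} [Fintype V] (G : BiddingGame V) (T : Set V) (v : V)
    (t : ℝ) : Prop :=
  (∀ B : ℝ, B ≤ 1 → t < B → ∀ tb : TieBreak V, ∃ f1 : Strat V, Legal1 G f1 B ∧
      ∀ f2 : Strat V, Legal2 G f2 (1 - B) → ∃ n, visit tb f1 f2 v n ∈ T) ∧
  (∀ B : ℝ, B ≤ 1 → 1 - t < B → ∀ tb : TieBreak V, ∃ f2 : Strat V, Legal2 G f2 B ∧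
      ∀ f1 : Strat V, Legal1 G f1 (1 - B) → ∀ n, visit tb f1 f2 v n ∉ T)

/-! ### Parity games -/

/-- Player 1 wins an outcome of a parity game: the maximal parity index visited
infinitely often is odd. -/
def Win1Parity {V : Type} (p : V → ℕ) (tb : TieBreak V) (f1 f2 : Strat V)
    (v0 : V) : Prop :=
  Odd (sSup {k : ℕ | ∀ N : ℕ, ∃ n ≥ N, p (visit tb f1 f2 v0 n) = k})

def Win1ParityFrom {V : Type} [Fintype V] (G : BiddingGame V) (p : V → ℕ) (v0 : V)
    (B : ℝ) : Prop :=
  ∀ tb : TieBreak V, ∃ f1 : Strat V, Legal1 G f1 B ∧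
    ∀ f2 : Strat V, Legal2 G f2 (1 - B) → Win1Parity p tb f1 f2 v0

def Win2ParityFrom {V : Type} [Fintype V] (G : BiddingGame V) (p : V → ℕ) (v0 : V)
    (B : ℝ) : Prop :=
  ∀ tb : TieBreak V, ∃ f2 : Strat V, Legal2 G f2 B ∧
    ∀ f1 : Strat V, Legal1 G f1 (1 - B) → ¬ Win1Parity p tb f1 f2 v0

/-- `t` is a threshold budget at `v` in the parity game. -/
def IsThreshParity {V : Type} [Fintype V] (G : BiddingGame V) (p : V → ℕ) (v : V)
    (t : ℝ) : Prop :=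
  (∀ B : ℝ, B ≤ 1 → t < B → Win1ParityFrom G p v B) ∧
  (∀ B : ℝ, B ≤ 1 → 1 - t < B → Win2ParityFrom G p v B)

/-! ### Mean-payoff games (Min is Player 1, Max is Player 2) -/

/-- The mean-payoff value of the outcome. -/
noncomputable def mpval {V : Type} (w : V → ℤ) (tb : TieBreak V) (f1 f2 : Strat V)
    (v0 : V) : ℝ :=
  Filter.liminf (fun n : ℕ => (energy w tb f1 f2 v0 n : ℝ) / n) Filter.atTop

/-- Min can guarantee a nonpositive mean-payoff value from `v0` with budget `B`. -/
def MinWinsFrom {V : Type} [Fintype V] (G : BiddingGame V) (w : V → ℤ) (v0 : V)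
    (B : ℝ) : Prop :=
  ∀ tb : TieBreak V, ∃ f1 : Strat V, Legal1 G f1 B ∧
    ∀ f2 : Strat V, Legal2 G f2 (1 - B) → mpval w tb f1 f2 v0 ≤ 0

/-- Max can guarantee a strictly positive mean-payoff value from `v0` with budget `B`. -/
def MaxWinsFrom {V : Type} [Fintype V] (G : BiddingGame V) (w : V → ℤ) (v0 : V)
    (B : ℝ) : Prop :=
  ∀ tb : TieBreak V, ∃ f2 : Strat V, Legal2 G f2 B ∧
    ∀ f1 : Strat V, Legal1 G f1 (1 - B) → 0 < mpval w tb f1 f2 v0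

/-- `t` is a threshold budget at `v` in the mean-payoff game. -/
def IsThreshMP {V : Type} [Fintype V] (G : BiddingGame V) (w : V → ℤ) (v : V)
    (t : ℝ) : Prop :=
  (∀ B : ℝ, B ≤ 1 → t < B → MinWinsFrom G w v B) ∧
  (∀ B : ℝ, B ≤ 1 → 1 - t < B → MaxWinsFrom G w v B)

/-! ### The split graph `G^u` and the weighted Richman function -/

/-- Edges of `G^u`: `u` is split into `u_s = Sum.inl u` (keeping the outgoing edges of
`u`, with no incoming edges) and `u_t = Sum.inr ()` (receiving the edges into `u`, with
no outgoing edges). -/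
def splitE {V : Type} [Fintype V] (G : BiddingGame V) (u : V) :
    V ⊕ Unit → V ⊕ Unit → Prop
  | Sum.inl v, Sum.inl x => G.E v x ∧ x ≠ u
  | Sum.inl v, Sum.inr _ => G.E v u
  | Sum.inr _, _ => False

/-- The successors in `G^u` of a vertex `v ∈ V` (i.e. of `Sum.inl v`). -/
noncomputable def succu {V : Type} [Fintype V] (G : BiddingGame V) (u v : V) :
    Finset (V ⊕ Unit) :=
  Finset.univ.filter (fun y => splitE G u (Sum.inl v) y)

lemma succu_nonempty {V : Type} [Fintype V] (G : BiddingGame V) (u v : V) :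
    (succu G u v).Nonempty := by
  obtain ⟨x, hx⟩ := G.total v
  by_cases hxu : x = u
  · refine ⟨Sum.inr (), ?_⟩
    simp only [succu, Finset.mem_filter, Finset.mem_univ, true_and]
    exact show G.E v u from hxu ▸ hx
  · refine ⟨Sum.inl x, ?_⟩
    simp only [succu, Finset.mem_filter, Finset.mem_univ, true_and]
    exact show G.E v x ∧ x ≠ u from ⟨hx, hxu⟩

/-- `W(v⁺)`: the maximal value of `W` over the `G^u`-successors of `v`. -/
noncomputable def supWu {V : Type} [Fintype V] (G : BiddingGame V) (u : V)
    (W : V ⊕ Unit → ℝ) (v : V) : ℝ :=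
  (succu G u v).sup' (succu_nonempty G u v) W

/-- `W(v⁻)`: the minimal value of `W` over the `G^u`-successors of `v`. -/
noncomputable def infWu {V : Type} [Fintype V] (G : BiddingGame V) (u : V)
    (W : V ⊕ Unit → ℝ) (v : V) : ℝ :=
  (succu G u v).inf' (succu_nonempty G u v) W

/-- `W` is a weighted Richman function for the weights `w`, split at `u`:
`W(u_t) = 0` and `W(v) = (W(v⁺) + W(v⁻))/2 + w(v)` for every `v ∈ V`
(`Sum.inl v` represents `v`, in particular `Sum.inl u` is `u_s`). -/
def IsWRichman {V : Type} [Fintype V] (G : BiddingGame V) (w : V → ℝ) (u : V)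
    (W : V ⊕ Unit → ℝ) : Prop :=
  W (Sum.inr ()) = 0 ∧
  ∀ v : V, W (Sum.inl v) = (supWu G u W v + infWu G u W v) / 2 + w v

/-- Projection of `G^u`-vertices back to vertices of `G`. -/
def projU {V : Type} (u : V) : V ⊕ Unit → V := Sum.elim id (fun _ => u)

/-- `w_M`: the maximal absolute value of `W` over `V`. -/
noncomputable def wMax {V : Type} [Fintype V] (W : V ⊕ Unit → ℝ) (u : V) : ℝ :=
  Finset.univ.sup' ⟨u, Finset.mem_univ u⟩ (fun v : V => |W (Sum.inl v)|)

/-- `b_M`: the maximal value of the bid `(W(v⁺) − W(v⁻))/2` over `V`. -/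
noncomputable def bMax {V : Type} [Fintype V] (G : BiddingGame V) (u : V)
    (W : V ⊕ Unit → ℝ) : ℝ :=
  Finset.univ.sup' ⟨u, Finset.mem_univ u⟩
    (fun v : V => (supWu G u W v - infWu G u W v) / 2)

/-!
Along the play, Player 1 maintains the invariant that his budget exceeds `R(x, t - n)`, where
`x` is the vertex reached after `n` rounds. Off the targets, `R(x, k + 1) = (S + I) / 2` with
`S` and `I` the maximum and minimum of `R(·, k)` over the successors of `x`. Player 1 bids
`(S - I) / 2` and, upon winning, moves to a minimizing successor: his budget drops by
`(S - I) / 2` and still exceeds `I`. Upon losing, Player 2 moves to a vertex of value at most `S`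
but pays at least `(S - I) / 2`, so the budget then exceeds `S`. Since budgets never exceed `1`,
`vS` (of value `1`) is never visited, and after `t` rounds the budget exceeds `R(x, 0)`, which
forces `x = vR`.
-/

section RichmanStrategy

variable {V : Type}

lemma extend_rounds_length (tb : TieBreak V) (f1 f2 : Strat V) (h : Hist V) :
    (extend tb f1 f2 h).rounds.length = h.rounds.length + 1 := by
  unfold extend
  split_ifs <;> simp

lemma play_rounds_length (tb : TieBreak V) (f1 f2 : Strat V) (v0 : V) (n : ℕ) :
    (play tb f1 f2 v0 n).rounds.length = n := by
  induction n with
  | zero => rfl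
  | succ n ih => rw [play, extend_rounds_length, ih]

lemma extend_cases (tb : TieBreak V) (f1 f2 : Strat V) (h : Hist V) :
    ((extend tb f1 f2 h).cur = (f1 h).2 ∧ (extend tb f1 f2 h).pay1 = h.pay1 + (f1 h).1) ∨
    ((extend tb f1 f2 h).cur = (f2 h).2 ∧ (extend tb f1 f2 h).pay1 = h.pay1 - (f2 h).1 ∧
      (f1 h).1 ≤ (f2 h).1) := by
  unfold extend
  split_ifs with hwin
  · left
    simp [Hist.cur, Hist.pay1]
  · right
    push Not at hwin
    refine ⟨by simp [Hist.cur], by simp [Hist.pay1, sub_eq_add_neg], hwin.1⟩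

variable [Fintype V]

lemma legal2_budget_le_one {G : BiddingGame V} {f2 : Strat V} {B : ℝ}
    (hf2 : Legal2 G f2 (1 - B)) (tb : TieBreak V) (f1 : Strat V) (v0 : V) (n : ℕ) :
    B - (play tb f1 f2 v0 n).pay1 ≤ 1 := by
  obtain ⟨hbid0, hbid, -⟩ := hf2 tb f1 v0 n
  rw [Hist.pay2] at hbid
  linarith

lemma BiddingGame.mem_adj {G : BiddingGame V} {x u : V} : u ∈ G.adj x ↔ G.E x u := by
  simp [BiddingGame.adj]

noncomputable def BiddingGame.argminSucc (G : BiddingGame V) (f : V → ℝ) (x : V) : V :=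
  (Finset.exists_mem_eq_inf' (G.adj_nonempty x) f).choose

lemma BiddingGame.adj_argminSucc (G : BiddingGame V) (f : V → ℝ) (x : V) :
    G.E x (G.argminSucc f x) :=
  BiddingGame.mem_adj.mp (Finset.exists_mem_eq_inf' (G.adj_nonempty x) f).choose_spec.1

lemma BiddingGame.apply_argminSucc (G : BiddingGame V) (f : V → ℝ) (x : V) :
    f (G.argminSucc f x) = (G.adj x).inf' (G.adj_nonempty x) f :=
  (Finset.exists_mem_eq_inf' (G.adj_nonempty x) f).choose_spec.2.symm

lemma Rfun_nonneg (G : BiddingGame V) (vR vS : V) (i : ℕ) (v : V) : 0 ≤ Rfun G vR vS i v := by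
  induction i generalizing v with
  | zero => unfold Rfun; split_ifs <;> norm_num
  | succ i ih =>
    unfold Rfun
    split_ifs
    · rfl
    · exact zero_le_one
    · obtain ⟨u, hu⟩ := G.adj_nonempty v
      have hsup := (ih u).trans (Finset.le_sup' (Rfun G vR vS i) hu)
      have hinf := Finset.le_inf' (G.adj_nonempty v) (Rfun G vR vS i) fun u _ => ih u
      positivity

lemma Rfun_zero_of_ne (G : BiddingGame V) {vR vS v : V} (hv : v ≠ vR) : Rfun G vR vS 0 v = 1 :=
  if_neg hv

lemma Rfun_vS (G : BiddingGame V) {vR vS : V} (hSR : vS ≠ vR) (i : ℕ) : Rfun G vR vS i vS = 1 := by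
  cases i <;> simp [Rfun, hSR]

lemma Rfun_succ_of_ne (G : BiddingGame V) {vR vS v : V} (hR : v ≠ vR) (hS : v ≠ vS) (k : ℕ) :
    Rfun G vR vS (k + 1) v =
      ((G.adj v).sup' (G.adj_nonempty v) (Rfun G vR vS k) +
        (G.adj v).inf' (G.adj_nonempty v) (Rfun G vR vS k)) / 2 := by
  rw [Rfun, if_neg hR, if_neg hS]

lemma ne_vS_of_Rfun_lt_one (G : BiddingGame V) {vR vS v : V} {i : ℕ} (hR : v ≠ vR)
    (hv : Rfun G vR vS i v < 1) : v ≠ vS := by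
  rintro rfl
  exact hv.ne (Rfun_vS G hR i)

/-- The bid is capped by the budget only to make the strategy legal on every play; while the
invariant `R(x, t - n) < budget` holds, the cap is never active. -/
noncomputable def richmanStrat (G : BiddingGame V) (vR vS : V) (t : ℕ) (B : ℝ) : Strat V :=
  fun h =>
    let f := Rfun G vR vS (t - h.rounds.length - 1)
    (min (((G.adj h.cur).sup' (G.adj_nonempty h.cur) f -
        (G.adj h.cur).inf' (G.adj_nonempty h.cur) f) / 2) (B - h.pay1),
      G.argminSucc f h.cur)

lemma richmanStrat_bid_nonneg (G : BiddingGame V) (vR vS : V) (t : ℕ) (B : ℝ) {h : Hist V}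
    (hbudget : 0 ≤ B - h.pay1) : 0 ≤ (richmanStrat G vR vS t B h).1 := by
  obtain ⟨u, hu⟩ := G.adj_nonempty h.cur
  have hspread := (Finset.inf'_le (Rfun G vR vS (t - h.rounds.length - 1)) hu).trans
    (Finset.le_sup' (Rfun G vR vS (t - h.rounds.length - 1)) hu)
  exact le_min (by linarith) hbudget

lemma richmanStrat_budget_nonneg (G : BiddingGame V) (vR vS : V) (t : ℕ) {B : ℝ} (hB : 0 ≤ B)
    (tb : TieBreak V) (f2 : Strat V) (v0 : V) (n : ℕ) :
    0 ≤ B - (play tb (richmanStrat G vR vS t B) f2 v0 n).pay1 := by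
  induction n with
  | zero => simpa [play, Hist.pay1] using hB
  | succ n ih =>
    set h := play tb (richmanStrat G vR vS t B) f2 v0 n
    have hcap : (richmanStrat G vR vS t B h).1 ≤ B - h.pay1 := min_le_right _ _
    have hbid := richmanStrat_bid_nonneg G vR vS t B ih
    rw [play]
    rcases extend_cases tb (richmanStrat G vR vS t B) f2 h with ⟨-, hpay⟩ | ⟨-, hpay, hle⟩
    · rw [hpay]; linarith
    · rw [hpay]; linarith

lemma richmanStrat_legal (G : BiddingGame V) (vR vS : V) (t : ℕ) {B : ℝ} (hB : 0 ≤ B) :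
    Legal1 G (richmanStrat G vR vS t B) B := by
  intro tb f2 v0 n
  have hbudget := richmanStrat_budget_nonneg G vR vS t hB tb f2 v0 n
  exact ⟨richmanStrat_bid_nonneg G vR vS t B hbudget, min_le_right _ _,
    G.adj_argminSucc _ _⟩

lemma richmanStrat_invariant_extend (G : BiddingGame V) {vR vS : V} {t : ℕ} {B : ℝ}
    (tb : TieBreak V) (f2 : Strat V) {h : Hist V} {k : ℕ} (hk : t - h.rounds.length = k + 1)
    (hR : h.cur ≠ vR) (hS : h.cur ≠ vS) (hedge : G.E h.cur (f2 h).2)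
    (hbudget : Rfun G vR vS (k + 1) h.cur < B - h.pay1) :
    Rfun G vR vS k (extend tb (richmanStrat G vR vS t B) f2 h).cur <
      B - (extend tb (richmanStrat G vR vS t B) f2 h).pay1 := by
  set f1 := richmanStrat G vR vS t B
  set S := (G.adj h.cur).sup' (G.adj_nonempty h.cur) (Rfun G vR vS k)
  set I := (G.adj h.cur).inf' (G.adj_nonempty h.cur) (Rfun G vR vS k)
  rw [Rfun_succ_of_ne G hR hS] at hbudget
  have hI : 0 ≤ I := Finset.le_inf' _ _ fun u _ => Rfun_nonneg G vR vS k u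
  have hbid : (f1 h).1 = (S - I) / 2 := by
    simp only [f1, richmanStrat, show t - h.rounds.length - 1 = k by omega]
    exact min_eq_left (by linarith)
  rcases extend_cases tb f1 f2 h with ⟨hcur, hpay⟩ | ⟨hcur, hpay, hle⟩
  · have hmin : Rfun G vR vS k (f1 h).2 = I := by
      simp only [f1, richmanStrat, show t - h.rounds.length - 1 = k by omega]
      exact G.apply_argminSucc _ _
    rw [hcur, hpay, hmin, hbid]
    linarith
  · have hmax : Rfun G vR vS k (f2 h).2 ≤ S := Finset.le_sup' _ (BiddingGame.mem_adj.mpr hedge)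
    rw [hcur, hpay]
    linarith

lemma richmanStrat_invariant (G : BiddingGame V) {vR vS v : V} {t : ℕ} {B : ℝ}
    (hB : Rfun G vR vS t v < B) (tb : TieBreak V) {f2 : Strat V} (hf2 : Legal2 G f2 (1 - B))
    {n : ℕ} (hn : n ≤ t) :
    (∃ m ≤ n, visit tb (richmanStrat G vR vS t B) f2 v m = vR ∧
        ∀ k < m, visit tb (richmanStrat G vR vS t B) f2 v k ≠ vS) ∨
      (Rfun G vR vS (t - n) (visit tb (richmanStrat G vR vS t B) f2 v n) <
          B - (play tb (richmanStrat G vR vS t B) f2 v n).pay1 ∧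
        ∀ m < n, visit tb (richmanStrat G vR vS t B) f2 v m ≠ vS) := by
  set f1 := richmanStrat G vR vS t B
  induction n with
  | zero => exact Or.inr ⟨by simpa [visit, play, Hist.cur, Hist.pay1] using hB, by simp⟩
  | succ n ih =>
    rcases ih (by omega) with ⟨m, hm, hwin⟩ | ⟨hbudget, hnoS⟩
    · exact Or.inl ⟨m, by omega, hwin⟩
    by_cases hR : visit tb f1 f2 v n = vR
    · exact Or.inl ⟨n, by omega, hR, hnoS⟩
    have hS : visit tb f1 f2 v n ≠ vS :=
      ne_vS_of_Rfun_lt_one G hR (hbudget.trans_le (legal2_budget_le_one hf2 tb f1 v n))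
    have hlen := play_rounds_length tb f1 f2 v n
    refine Or.inr ⟨?_, fun m hm => ?_⟩
    · rw [show t - n = t - (n + 1) + 1 by omega] at hbudget
      exact richmanStrat_invariant_extend G tb f2 (by omega) hR hS (hf2 tb f1 v n).2.2 hbudget
    · rcases Nat.lt_succ_iff_lt_or_eq.mp hm with hm | rfl
      exacts [hnoS m hm, hS]

end RichmanStrategy

theorem richman_win_within_t_rounds_general
    {V : Type} [Fintype V] (G : BiddingGame V) (vR vS : V)
    (v : V) (t : ℕ) (B : ℝ) (hB : Rfun G vR vS t v < B)
    (tb : TieBreak V) :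
    ∃ f1 : Strat V, Legal1 G f1 B ∧
      ∀ f2 : Strat V, Legal2 G f2 (1 - B) →
        ∃ n ≤ t, visit tb f1 f2 v n = vR ∧ ∀ m < n, visit tb f1 f2 v m ≠ vS := by
  have hB0 : 0 ≤ B := (Rfun_nonneg G vR vS t v).trans hB.le
  refine ⟨richmanStrat G vR vS t B, richmanStrat_legal G vR vS t hB0, fun f2 hf2 => ?_⟩
  rcases richmanStrat_invariant G hB tb hf2 le_rfl with hwin | ⟨hbudget, hnoS⟩
  · exact hwin
  refine ⟨t, le_rfl, ?_, hnoS⟩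
  by_contra hR
  rw [Nat.sub_self, Rfun_zero_of_ne G hR] at hbudget
  linarith [legal2_budget_le_one hf2 tb (richmanStrat G vR vS t B) v t]

/-- In a Richman game, if Player 1's initial budget exceeds `R(v, t)`,
then he has a (legal) strategy guaranteeing that, against every (legal) Player 2
strategy, the outcome reaches his target `vR` within at most `t` rounds (the game not
having ended at `vS` before); this holds for every tie-breaking mechanism. -/
theorem richman_win_within_t_rounds
    {V : Type} [Fintype V] (G : BiddingGame V) (vR vS : V) (hRS : vR ≠ vS)
    (v : V) (t : ℕ) (B : ℝ) (hB1 : B ≤ 1) (hB : Rfun G vR vS t v < B)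
    (tb : TieBreak V) :
    ∃ f1 : Strat V, Legal1 G f1 B ∧
      ∀ f2 : Strat V, Legal2 G f2 (1 - B) →
        ∃ n ≤ t, visit tb f1 f2 v n = vR ∧ ∀ m < n, visit tb f1 f2 v m ≠ vS :=
  richman_win_within_t_rounds_general G vR vS v t B hB tb
end

section
/- Consider a strongly-connected parity bidding game G = (V, E, p). There exists τ ∈ {0,1} such that the threshold budget of every vertex v ∈ V equals τ, and τ = 0 if and only if max_{v ∈ V} p(v) is odd. That is: if the maximal parity index in G is odd, then from every vertex and with every strictly positive initial budget Player 1 has a winning strategy, and if the maximal parity index is even, then from every vertex and with every strictly positive initial budget Player 2 has a winning strategy. -/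
open scoped Classical

/-!
Let `t` be a vertex of maximal parity index. Every vertex reaches `t`, so the vertices can be
ranked so that every `v ≠ t` has a successor of smaller rank. A player with any positive budget
forces infinitely many visits to `t` by bidding `c * 2 ^ (-rank v)` and descending the ranks:
`budget + c * 2 ^ (-rank)` never decreases and grows by at least `c * 2 ^ (-max rank)` with every
lost bidding, so the token cannot avoid `t` forever, and halving `c` at every visit to `t` keeps
the bids affordable. The maximal parity index visited infinitely often is then `p t`, so the
player matching its parity wins with every positive budget.
-/

section Ranking

variable {V : Type} {E : V → V → Prop} {t : V}

def ReachesWithin (E : V → V → Prop) (t : V) : ℕ → V → Prop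
  | 0, v => v = t
  | k + 1, v => v = t ∨ ∃ u, E v u ∧ ReachesWithin E t k u

theorem ReachesWithin.exists_of_reflTransGen {v : V} (h : Relation.ReflTransGen E v t) :
    ∃ k, ReachesWithin E t k v := by
  induction h using Relation.ReflTransGen.head_induction_on with
  | refl => exact ⟨0, rfl⟩
  | head hvu _ ih =>
    obtain ⟨k, hk⟩ := ih
    exact ⟨k + 1, .inr ⟨_, hvu, hk⟩⟩

structure ReachRanking (E : V → V → Prop) (t : V) where
  rank : V → ℕ
  next : V → V
  edge_next : ∀ v, E v (next v)
  rank_pos : ∀ v, v ≠ t → 0 < rank v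
  rank_next_lt : ∀ v, v ≠ t → rank (next v) < rank v

theorem ReachRanking.nonempty_of_reach (hreach : ∀ v, Relation.ReflTransGen E v t)
    (htotal : ∀ v, ∃ u, E v u) : Nonempty (ReachRanking E t) := by
  let rank v := Nat.find (ReachesWithin.exists_of_reflTransGen (hreach v))
  have rank_pos : ∀ v, v ≠ t → 0 < rank v := fun v hv =>
    Nat.pos_of_ne_zero fun h0 => hv ((Nat.find_eq_zero _).1 h0)
  have step : ∀ v, ∃ u, E v u ∧ (v ≠ t → rank u < rank v) := by
    intro v
    by_cases hv : v = t
    · obtain ⟨u, hu⟩ := htotal v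
      exact ⟨u, hu, fun h => (h hv).elim⟩
    · obtain ⟨k, hk⟩ := Nat.exists_eq_add_one_of_ne_zero (rank_pos v hv).ne'
      have hvk : ReachesWithin E t (k + 1) v :=
        hk ▸ Nat.find_spec (ReachesWithin.exists_of_reflTransGen (hreach v))
      obtain ⟨u, hvu, hu⟩ := hvk.resolve_left hv
      exact ⟨u, hvu, fun _ => hk ▸ Nat.lt_succ_of_le (Nat.find_min' _ hu)⟩
  choose next hnext using step
  exact ⟨⟨rank, next, fun v => (hnext v).1, rank_pos, fun v => (hnext v).2⟩⟩

namespace ReachRanking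

variable (r : ReachRanking E t)

noncomputable def weight (v : V) : ℝ :=
  if v = t then 0 else (1 / 2) ^ r.rank v

theorem weight_target : r.weight t = 0 :=
  if_pos rfl

theorem weight_nonneg (v : V) : 0 ≤ r.weight v := by
  unfold weight
  split_ifs <;> positivity

theorem weight_le_half (v : V) : r.weight v ≤ 1 / 2 := by
  unfold weight
  split_ifs with hv
  · norm_num
  · exact pow_le_of_le_one (by norm_num) (by norm_num) (r.rank_pos v hv).ne'

theorem two_mul_weight_le_weight_next (v : V) (hnext : r.next v ≠ t) :
    2 * r.weight v ≤ r.weight (r.next v) := by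
  by_cases hv : v = t
  · simpa [weight, hv] using r.weight_nonneg (r.next v)
  · simp only [weight, if_neg hv, if_neg hnext]
    calc 2 * (1 / 2 : ℝ) ^ r.rank v ≤ 2 * (1 / 2) ^ (r.rank (r.next v) + 1) := by
          gcongr 2 * ?_
          exact pow_le_pow_of_le_one (by norm_num) (by norm_num) (r.rank_next_lt v hv)
      _ = (1 / 2) ^ r.rank (r.next v) := by ring

noncomputable def maxRank [Fintype V] : ℕ :=
  Finset.univ.sup r.rank

theorem rank_le_maxRank [Fintype V] (v : V) : r.rank v ≤ r.maxRank :=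
  Finset.le_sup (Finset.mem_univ v)

theorem pow_maxRank_le_weight [Fintype V] {v : V} (hv : v ≠ t) :
    (1 / 2 : ℝ) ^ r.maxRank ≤ r.weight v := by
  rw [weight, if_neg hv]
  exact pow_le_pow_of_le_one (by norm_num) (by norm_num) (r.rank_le_maxRank v)

/-- `x n` is the position and `β n` the budget of a player who bids `c n * r.weight (x n)` and
moves to `r.next (x n)` upon winning, halving the scale `c` at every visit to `t`. -/
structure IsRun (x : ℕ → V) (β c : ℕ → ℝ) : Prop where
  scale_succ : ∀ n, c (n + 1) = if x (n + 1) = t then c n / 2 else c n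
  round : ∀ n, (β (n + 1) = β n - c n * r.weight (x n) ∧ x (n + 1) = r.next (x n)) ∨
    β n + c n * r.weight (x n) ≤ β (n + 1)

variable {r} {x : ℕ → V} {β c : ℕ → ℝ}

theorem IsRun.scale_nonneg (hrun : r.IsRun x β c) (hc0 : 0 ≤ c 0) (n : ℕ) : 0 ≤ c n := by
  induction n with
  | zero => exact hc0
  | succ n ih =>
    rw [hrun.scale_succ]
    split_ifs <;> positivity

theorem IsRun.scale_pos (hrun : r.IsRun x β c) (hc0 : 0 < c 0) (n : ℕ) : 0 < c n := by
  induction n with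
  | zero => exact hc0
  | succ n ih =>
    rw [hrun.scale_succ]
    split_ifs <;> positivity

theorem IsRun.scale_succ_le (hrun : r.IsRun x β c) (hc0 : 0 ≤ c 0) (n : ℕ) :
    c (n + 1) ≤ c n := by
  have := hrun.scale_nonneg hc0 n
  rw [hrun.scale_succ]
  split_ifs <;> linarith

/-- Each won round keeps `β + c * weight` while the weight at least doubles, which pays for the
halving of `c` upon reaching `t` (where the weight is `0`). -/
theorem IsRun.scale_mul_le_budget (hrun : r.IsRun x β c) (hc0 : 0 ≤ c 0)
    (hcβ : c 0 ≤ β 0 / 2) (n : ℕ) : c n * (2 - r.weight (x n)) ≤ β n := by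
  induction n with
  | zero => nlinarith [r.weight_nonneg (x 0)]
  | succ n ih =>
    have hc := hrun.scale_nonneg hc0 n
    have hc' := hrun.scale_nonneg hc0 (n + 1)
    have hcc := hrun.scale_succ_le hc0 n
    have hw := r.weight_le_half (x n)
    have hw' := r.weight_nonneg (x (n + 1))
    rcases hrun.round n with ⟨hβ, hx⟩ | hβ
    · by_cases hxt : x (n + 1) = t
      · have hhalf : c (n + 1) = c n / 2 := by rw [hrun.scale_succ, if_pos hxt]
        rw [hβ, hhalf, hxt, r.weight_target]
        nlinarith
      · have hdouble := r.two_mul_weight_le_weight_next (x n) (hx ▸ hxt)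
        rw [← hx] at hdouble
        nlinarith
    · nlinarith

theorem IsRun.bid_le_budget (hrun : r.IsRun x β c) (hc0 : 0 ≤ c 0) (hcβ : c 0 ≤ β 0 / 2)
    (n : ℕ) : 0 ≤ c n * r.weight (x n) ∧ c n * r.weight (x n) ≤ β n := by
  have hc := hrun.scale_nonneg hc0 n
  have hw := r.weight_nonneg (x n)
  have hw' := r.weight_le_half (x n)
  have := hrun.scale_mul_le_budget hc0 hcβ n
  exact ⟨mul_nonneg hc hw, by nlinarith⟩

/-- A won round keeps `β + c * weight` and lowers the rank; a lost one raises `β` by at least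
`c * weight`, while the new `c * weight` is at least `c * 2 ^ (-maxRank) = ε * (maxRank + 1)`. -/
theorem IsRun.potential_step [Fintype V] (hrun : r.IsRun x β c) {n : ℕ} {ε : ℝ}
    (hc : 0 ≤ c n) (hε0 : 0 ≤ ε) (hε : c n * (1 / 2) ^ r.maxRank = ε * (r.maxRank + 1))
    (hx : x n ≠ t) (hx' : x (n + 1) ≠ t) :
    β n + c n * r.weight (x n) - ε * r.rank (x n) + ε ≤
      β (n + 1) + c n * r.weight (x (n + 1)) - ε * r.rank (x (n + 1)) := by
  have hw := r.weight_nonneg (x n)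
  rcases hrun.round n with ⟨hβ, hnext⟩ | hβ
  · have hdouble := r.two_mul_weight_le_weight_next (x n) (hnext ▸ hx')
    have hrank : (r.rank (x (n + 1)) : ℝ) + 1 ≤ r.rank (x n) := by
      rw [hnext]
      exact_mod_cast r.rank_next_lt _ hx
    rw [← hnext] at hdouble
    rw [hβ]
    nlinarith
  · have hw' := r.pow_maxRank_le_weight hx'
    have hrank : (r.rank (x (n + 1)) : ℝ) ≤ r.maxRank := by exact_mod_cast r.rank_le_maxRank _
    have : 0 ≤ ε * r.rank (x n) := by positivity
    nlinarith

theorem IsRun.frequently_target [Fintype V] (hrun : r.IsRun x β c) (hc0 : 0 < c 0)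
    (hcβ : c 0 ≤ β 0 / 2) (hβ1 : ∀ n, β n ≤ 1) (N : ℕ) : ∃ m ≥ N, x m = t := by
  by_contra! hN
  have hconst : ∀ j, c (N + j) = c N := by
    intro j
    induction j with
    | zero => rfl
    | succ j ih => rw [← add_assoc, hrun.scale_succ, if_neg (hN _ (by omega)), ih]
  have ha : 0 < c N := hrun.scale_pos hc0 N
  set ε : ℝ := c N * (1 / 2) ^ r.maxRank / (r.maxRank + 1) with hε
  have hεpos : 0 < ε := by positivity
  let Ψ : ℕ → ℝ := fun m => β m + c N * r.weight (x m) - ε * r.rank (x m)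
  have hgrow : ∀ j : ℕ, Ψ N + j * ε ≤ Ψ (N + j) := by
    intro j
    induction j with
    | zero => simp
    | succ j ih =>
      have hstep := hrun.potential_step (ha.le.trans_eq (hconst j).symm) hεpos.le
        (by rw [hconst, hε]; field_simp) (hN _ (by omega)) (hN _ (by omega))
      rw [hconst] at hstep
      push_cast
      simp only [Ψ, ← add_assoc] at ih ⊢
      linarith
  have hupper : ∀ m, Ψ m ≤ 1 + c N := by
    intro m
    have := hβ1 m
    have := r.weight_le_half (x m)
    have : 0 ≤ ε * r.rank (x m) := by positivity
    simp only [Ψ]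
    nlinarith
  have hlower : -(ε * r.maxRank) ≤ Ψ N := by
    have hβ := hrun.scale_mul_le_budget hc0.le hcβ N
    have hw := r.weight_le_half (x N)
    have hw' := r.weight_nonneg (x N)
    have hrank : (r.rank (x N) : ℝ) ≤ r.maxRank := by exact_mod_cast r.rank_le_maxRank _
    simp only [Ψ]
    nlinarith
  obtain ⟨j, hj⟩ := exists_nat_gt ((1 + c N + ε * r.maxRank) / ε)
  rw [div_lt_iff₀ hεpos] at hj
  linarith [hgrow j, hupper (N + j)]

end ReachRanking

end Ranking

section Play

variable {V : Type}

theorem Hist.cur_snoc (h : Hist V) (b : BidRound V) :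
    (⟨h.init, h.rounds ++ [b]⟩ : Hist V).cur = b.dest := by
  simp [Hist.cur]

theorem Hist.pay1_snoc (h : Hist V) (b : BidRound V) :
    (⟨h.init, h.rounds ++ [b]⟩ : Hist V).pay1 = h.pay1 + if b.p1Won then b.bid else -b.bid := by
  simp [Hist.pay1]

noncomputable def Hist.scale (t : V) (B : ℝ) (h : Hist V) : ℝ :=
  B / 2 ^ ((h.rounds.map BidRound.dest).count t + 1)

theorem Hist.scale_nil (t : V) (B : ℝ) (v0 : V) : (⟨v0, []⟩ : Hist V).scale t B = B / 2 := by
  simp [Hist.scale]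

theorem Hist.scale_snoc (t : V) (B : ℝ) (h : Hist V) (b : BidRound V) :
    (⟨h.init, h.rounds ++ [b]⟩ : Hist V).scale t B =
      if b.dest = t then h.scale t B / 2 else h.scale t B := by
  unfold Hist.scale
  split_ifs with hb <;> simp [hb, pow_succ, div_div]

theorem extend_eq_or (tb : TieBreak V) (f1 f2 : Strat V) (h : Hist V) :
    ((f2 h).1 ≤ (f1 h).1 ∧
        extend tb f1 f2 h = ⟨h.init, h.rounds ++ [⟨(f1 h).2, (f1 h).1, true⟩]⟩) ∨
      ((f1 h).1 ≤ (f2 h).1 ∧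
        extend tb f1 f2 h = ⟨h.init, h.rounds ++ [⟨(f2 h).2, (f2 h).1, false⟩]⟩) := by
  unfold extend
  split_ifs with hwin
  · exact .inl ⟨hwin.elim le_of_lt fun h => h.1.ge, rfl⟩
  · exact .inr ⟨not_lt.1 fun hlt => hwin (.inl hlt), rfl⟩

theorem scale_play_succ (t : V) (B : ℝ) (tb : TieBreak V) (f1 f2 : Strat V) (v0 : V) (n : ℕ) :
    (play tb f1 f2 v0 (n + 1)).scale t B =
      if visit tb f1 f2 v0 (n + 1) = t then (play tb f1 f2 v0 n).scale t B / 2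
      else (play tb f1 f2 v0 n).scale t B := by
  simp only [visit, play]
  rcases extend_eq_or tb f1 f2 (play tb f1 f2 v0 n) with ⟨-, he⟩ | ⟨-, he⟩ <;>
    simp only [he, Hist.scale_snoc, Hist.cur_snoc]

theorem budget1_le_one [Fintype V] (G : BiddingGame V) {B : ℝ} {f2 : Strat V}
    (hf2 : Legal2 G f2 (1 - B)) (tb : TieBreak V) (f1 : Strat V) (v0 : V) (n : ℕ) :
    B - (play tb f1 f2 v0 n).pay1 ≤ 1 := by
  obtain ⟨h0, h1, -⟩ := hf2 tb f1 v0 n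
  rw [Hist.pay2] at h1
  linarith

theorem budget2_le_one [Fintype V] (G : BiddingGame V) {B : ℝ} {f1 : Strat V}
    (hf1 : Legal1 G f1 (1 - B)) (tb : TieBreak V) (f2 : Strat V) (v0 : V) (n : ℕ) :
    B - (play tb f1 f2 v0 n).pay2 ≤ 1 := by
  obtain ⟨h0, h1, -⟩ := hf1 tb f2 v0 n
  rw [Hist.pay2]
  linarith

end Play

namespace ReachRanking

section

variable {V : Type} {E : V → V → Prop} {t : V} (r : ReachRanking E t)

noncomputable def strat (B : ℝ) : Strat V := fun h =>
  (h.scale t B * r.weight h.cur, r.next h.cur)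

theorem isRun_player1 (B : ℝ) (tb : TieBreak V) (f2 : Strat V) (v0 : V) :
    r.IsRun (visit tb (r.strat B) f2 v0) (fun n => B - (play tb (r.strat B) f2 v0 n).pay1)
      (fun n => (play tb (r.strat B) f2 v0 n).scale t B) where
  scale_succ := scale_play_succ t B tb _ f2 v0
  round n := by
    simp only [visit, play]
    rcases extend_eq_or tb (r.strat B) f2 (play tb (r.strat B) f2 v0 n) with ⟨-, he⟩ | ⟨hle, he⟩
    · left
      rw [he, Hist.pay1_snoc, Hist.cur_snoc]
      exact ⟨by simp only [strat, if_true]; ring, rfl⟩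
    · right
      rw [he, Hist.pay1_snoc]
      simp only [strat, Bool.false_eq_true, if_false] at hle ⊢
      linarith

theorem isRun_player2 (B : ℝ) (tb : TieBreak V) (f1 : Strat V) (v0 : V) :
    r.IsRun (visit tb f1 (r.strat B) v0) (fun n => B - (play tb f1 (r.strat B) v0 n).pay2)
      (fun n => (play tb f1 (r.strat B) v0 n).scale t B) where
  scale_succ := scale_play_succ t B tb f1 _ v0
  round n := by
    simp only [visit, play, Hist.pay2]
    rcases extend_eq_or tb f1 (r.strat B) (play tb f1 (r.strat B) v0 n) with ⟨hle, he⟩ | ⟨-, he⟩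
    · right
      rw [he, Hist.pay1_snoc]
      simp only [strat, if_true] at hle ⊢
      linarith
    · left
      rw [he, Hist.pay1_snoc, Hist.cur_snoc]
      exact ⟨by simp only [strat, Bool.false_eq_true, if_false]; ring, rfl⟩

end

section

variable {V : Type} [Fintype V] {G : BiddingGame V} {t : V} (r : ReachRanking G.E t) {B : ℝ}

theorem legal1_strat (hB : 0 ≤ B) : Legal1 G (r.strat B) B := by
  intro tb f2 v0 n
  obtain ⟨hbid0, hbid⟩ := (r.isRun_player1 B tb f2 v0).bid_le_budget
    (by rw [play, Hist.scale_nil]; positivity) (by simp [play, Hist.scale_nil, Hist.pay1]) n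
  exact ⟨hbid0, hbid, r.edge_next _⟩

theorem legal2_strat (hB : 0 ≤ B) : Legal2 G (r.strat B) B := by
  intro tb f1 v0 n
  obtain ⟨hbid0, hbid⟩ := (r.isRun_player2 B tb f1 v0).bid_le_budget
    (by rw [play, Hist.scale_nil]; positivity) (by simp [play, Hist.scale_nil, Hist.pay2, Hist.pay1]) n
  exact ⟨hbid0, hbid, r.edge_next _⟩

theorem frequently_visit_player1 (hB : 0 < B) (tb : TieBreak V) {f2 : Strat V}
    (hf2 : Legal2 G f2 (1 - B)) (v0 : V) (N : ℕ) :
    ∃ m ≥ N, visit tb (r.strat B) f2 v0 m = t :=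
  (r.isRun_player1 B tb f2 v0).frequently_target (by simp [play, Hist.scale_nil, hB])
    (by simp [play, Hist.scale_nil, Hist.pay1]) (budget1_le_one G hf2 tb _ v0) N

theorem frequently_visit_player2 (hB : 0 < B) (tb : TieBreak V) {f1 : Strat V}
    (hf1 : Legal1 G f1 (1 - B)) (v0 : V) (N : ℕ) :
    ∃ m ≥ N, visit tb f1 (r.strat B) v0 m = t :=
  (r.isRun_player2 B tb f1 v0).frequently_target (by simp [play, Hist.scale_nil, hB])
    (by simp [play, Hist.scale_nil, Hist.pay2, Hist.pay1]) (budget2_le_one G hf1 tb _ v0) N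

end

end ReachRanking

theorem sSup_frequentValues_eq_of_frequently_argmax {V : Type} (p : V → ℕ) (x : ℕ → V) {t : V}
    (hmax : ∀ v, p v ≤ p t) (hfreq : ∀ N, ∃ n ≥ N, x n = t) :
    sSup {k : ℕ | ∀ N : ℕ, ∃ n ≥ N, p (x n) = k} = p t := by
  refine IsGreatest.csSup_eq ⟨fun N => ?_, fun k hk => ?_⟩
  · obtain ⟨n, hn, hxn⟩ := hfreq N
    exact ⟨n, hn, by rw [hxn]⟩
  · obtain ⟨n, -, rfl⟩ := hk 0
    exact hmax (x n)

/-- In a strongly-connected parity bidding game there is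
`τ ∈ {0, 1}` that is the threshold budget of every vertex, and `τ = 0` iff the maximal
parity index in the game is odd; so with an odd maximal index Player 1 wins from every
vertex with every positive budget, and with an even maximal index Player 2 does. -/
theorem parity_scc_classification
    {V : Type} [Fintype V] [Nonempty V] (G : BiddingGame V) (p : V → ℕ)
    (hsc : StronglyConnected G) :
    ∃ τ : ℝ, (τ = 0 ∨ τ = 1) ∧ (∀ v : V, IsThreshParity G p v τ) ∧
      (τ = 0 ↔ Odd (Finset.univ.sup' Finset.univ_nonempty p)) := by
  obtain ⟨t, -, ht⟩ := Finset.exists_mem_eq_sup' Finset.univ_nonempty p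
  have hmax : ∀ v, p v ≤ p t := fun v => ht ▸ Finset.le_sup' p (Finset.mem_univ v)
  obtain ⟨r⟩ := ReachRanking.nonempty_of_reach (fun v => hsc v t) G.total
  rw [ht]
  by_cases hodd : Odd (p t)
  · refine ⟨0, .inl rfl, fun v => ⟨fun B _ hB tb => ⟨r.strat B, r.legal1_strat hB.le,
      fun f2 hf2 => ?_⟩, fun B hB1 hB => by linarith⟩, by simp [hodd]⟩
    rw [Win1Parity, sSup_frequentValues_eq_of_frequently_argmax p _ hmax
      (r.frequently_visit_player1 hB tb hf2 v)]
    exact hodd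
  · refine ⟨1, .inr rfl, fun v => ⟨fun B hB1 hB => by linarith, fun B _ hB tb =>
      ⟨r.strat B, r.legal2_strat (by linarith), fun f1 hf1 => ?_⟩⟩, by simp [hodd]⟩
    rw [Win1Parity, sSup_frequentValues_eq_of_frequently_argmax p _ hmax
      (r.frequently_visit_player2 (by linarith) tb hf1 v)]
    exact hodd
end

section
/- Consider a parity bidding game G = (V, E, p). A bottom strongly-connected component (BSCC) of G is a strongly-connected component with no edges leaving it. Let R ⊆ V be the set of vertices of BSCCs whose maximal parity index is odd and let S ⊆ V be the set of vertices of BSCCs whose maximal parity index is even. Let G' be the Richman game obtained from G by making R the target set of Player 1 and S the target set of Player 2 (Player 1 wins an outcome of G' iff it reaches R before reaching S). Then for every v ∈ V, the threshold budget of v in G equals the threshold budget of v in G'. -/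
open scoped Classical

/-- A vertex `v` belongs to a bottom strongly-connected component (BSCC): every vertex
reachable from `v` can reach `v` back. -/
def InBSCC {V : Type} [Fintype V] (G : BiddingGame V) (v : V) : Prop :=
  ∀ x : V, Relation.ReflTransGen G.E v x → Relation.ReflTransGen G.E x v

/-- The maximal parity index occurring in the set of vertices reachable from `v`
(for `v` in a BSCC, this is the maximal index of its BSCC). -/
noncomputable def bsccMaxIndex {V : Type} [Fintype V] (G : BiddingGame V) (p : V → ℕ)
    (v : V) : ℕ :=
  (Finset.univ.filter (fun x => Relation.ReflTransGen G.E v x)).sup'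
    ⟨v, Finset.mem_filter.mpr ⟨Finset.mem_univ v, Relation.ReflTransGen.refl⟩⟩ p


/-!
Let `θ v` be the value, computed by value iteration, of the Richman game in which Player 1
wants to reach `R` before `S`. Above `θ v`, Player 1 follows the Richman strategy until he
enters `R`, never touching `S`. The set `R` is a closed union of BSCCs, and inside a BSCC the
vertices of maximal index have Richman value `0`, so any positive budget lets him revisit them
forever; the maximal index seen infinitely often is then the odd index of the BSCC he entered.
Since every BSCC lies in `R ∪ S`, a maximum principle makes the fixed point of the Richman
operator unique, so the value of reaching `S` before `R` is `1 - θ v`, and above `1 - θ v` the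
symmetric strategy wins both games for Player 2. Hence `θ v` is a threshold of both games, and
thresholds are unique.
-/

open Relation Filter Topology

lemma sSup_setOf_frequently_eq {a : ℕ → ℕ} {K j : ℕ} (hle : ∀ n ≥ j, a n ≤ K)
    (hK : ∀ N, ∃ n ≥ N, a n = K) : sSup {k | ∀ N, ∃ n ≥ N, a n = k} = K :=
  IsGreatest.csSup_eq ⟨hK, fun _ hk => by
    obtain ⟨n, hn, rfl⟩ := hk j
    exact hle n hn⟩

/-- `P B` and `Q B` say that Player 1, respectively Player 2, wins with initial budget `B`. -/
def IsThreshold (P Q : ℝ → Prop) (t : ℝ) : Prop :=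
  (∀ B, B ≤ 1 → t < B → P B) ∧ (∀ B, B ≤ 1 → 1 - t < B → Q B)

lemma isThreshold_iff_eq {P Q : ℝ → Prop} {θ t : ℝ} (hP : ∀ B, θ < B → P B)
    (hQ : ∀ B, 1 - θ < B → Q B) (hPQ : ∀ B, P B → Q (1 - B) → False)
    (hθ0 : 0 ≤ θ) (hθ1 : θ ≤ 1) : IsThreshold P Q t ↔ t = θ := by
  refine ⟨fun ⟨h1, h2⟩ => ?_, fun ht => ht ▸ ⟨fun B _ => hP B, fun B _ => hQ B⟩⟩
  by_contra hne
  rcases lt_or_gt_of_ne hne with hlt | hlt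
  · exact hPQ ((t + θ) / 2) (h1 _ (by linarith) (by linarith)) (hQ _ (by linarith))
  · exact hPQ ((t + θ) / 2) (hP _ (by linarith)) (h2 _ (by linarith) (by linarith))

namespace BiddingGame

section Graph

variable {V : Type} [Fintype V] (G : BiddingGame V)

def ForwardClosed (I : Set V) : Prop :=
  ∀ y ∈ I, ∀ z, G.E y z → z ∈ I

noncomputable def reachSet (x : V) : Finset V :=
  Finset.univ.filter (ReflTransGen G.E x)

variable {G}

lemma mem_adj_s5 {x y : V} : y ∈ G.adj x ↔ G.E x y := by
  simp [BiddingGame.adj]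

lemma mem_reachSet {x y : V} : y ∈ G.reachSet x ↔ ReflTransGen G.E x y := by
  simp [reachSet]

lemma ForwardClosed.mem_of_reach {I : Set V} (hI : G.ForwardClosed I) {y z : V} (hy : y ∈ I)
    (h : ReflTransGen G.E y z) : z ∈ I := by
  induction h with
  | refl => exact hy
  | tail _ hE ih => exact hI _ ih _ hE

lemma reachSet_subset {x y : V} (h : ReflTransGen G.E x y) : G.reachSet y ⊆ G.reachSet x :=
  fun _ hz => mem_reachSet.2 (h.trans (mem_reachSet.1 hz))

/-- A vertex minimising the number of vertices it can reach lies in a BSCC. -/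
lemma exists_reach_inBSCC (x : V) : ∃ y, ReflTransGen G.E x y ∧ InBSCC G y := by
  obtain ⟨y, hy, hmin⟩ := (G.reachSet x).exists_min_image (fun z => (G.reachSet z).card)
    ⟨x, mem_reachSet.2 ReflTransGen.refl⟩
  refine ⟨y, mem_reachSet.1 hy, fun z hz => ?_⟩
  have hzx : z ∈ G.reachSet x := mem_reachSet.2 ((mem_reachSet.1 hy).trans hz)
  have heq := Finset.eq_of_subset_of_card_le (reachSet_subset hz) (hmin z hzx)
  exact mem_reachSet.1 (heq ▸ mem_reachSet.2 ReflTransGen.refl)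

section BSCC

variable {x y : V}

lemma _root_.InBSCC.of_reach (hx : InBSCC G x) (h : ReflTransGen G.E x y) : InBSCC G y :=
  fun _ hz => (hx _ (h.trans hz)).trans h

lemma _root_.InBSCC.bsccMaxIndex_eq (p : V → ℕ) (hx : InBSCC G x) (h : ReflTransGen G.E x y) :
    bsccMaxIndex G p y = bsccMaxIndex G p x :=
  Finset.sup'_congr _ ((reachSet_subset h).antisymm (reachSet_subset (hx y h))) fun _ _ => rfl

lemma le_bsccMaxIndex (p : V → ℕ) (h : ReflTransGen G.E x y) : p y ≤ bsccMaxIndex G p x :=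
  Finset.le_sup' p (mem_reachSet.2 h)

lemma exists_reach_eq_bsccMaxIndex (p : V → ℕ) (x : V) :
    ∃ y, ReflTransGen G.E x y ∧ p y = bsccMaxIndex G p x := by
  obtain ⟨y, hy, hp⟩ := Finset.exists_mem_eq_sup' ⟨x, mem_reachSet.2 .refl⟩ p
  exact ⟨y, mem_reachSet.1 hy, hp.symm⟩

lemma forwardClosed_setOf_inBSCC (p : V → ℕ) (P : ℕ → Prop) :
    G.ForwardClosed {x | InBSCC G x ∧ P (bsccMaxIndex G p x)} := by
  rintro x ⟨hx, hP⟩ y hE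
  exact ⟨hx.of_reach (.single hE), by rwa [hx.bsccMaxIndex_eq p (.single hE)]⟩

end BSCC

end Graph

/-! ### The Richman operator and its value iteration -/

section RichmanOperator

variable {V : Type} [Fintype V] (G : BiddingGame V)

noncomputable def succMax (f : V → ℝ) (v : V) : ℝ := (G.adj v).sup' (G.adj_nonempty v) f

noncomputable def succMin (f : V → ℝ) (v : V) : ℝ := (G.adj v).inf' (G.adj_nonempty v) f

noncomputable def someSucc (v : V) : V := (G.total v).choose

noncomputable def argminSucc_s5 (f : V → ℝ) (v : V) : V :=
  (Finset.exists_mem_eq_inf' (G.adj_nonempty v) f).choose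

variable {G} {f g : V → ℝ} {u v : V} {c : ℝ}

lemma E_someSucc (v : V) : G.E v (G.someSucc v) := (G.total v).choose_spec

lemma E_argminSucc (f : V → ℝ) (v : V) : G.E v (G.argminSucc_s5 f v) :=
  mem_adj_s5.1 (Finset.exists_mem_eq_inf' (G.adj_nonempty v) f).choose_spec.1

lemma apply_argminSucc_s5 (f : V → ℝ) (v : V) : f (G.argminSucc_s5 f v) = G.succMin f v :=
  (Finset.exists_mem_eq_inf' (G.adj_nonempty v) f).choose_spec.2.symm

lemma le_succMax (h : G.E v u) : f u ≤ G.succMax f v := Finset.le_sup' f (mem_adj_s5.2 h)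

lemma succMin_le (h : G.E v u) : G.succMin f v ≤ f u := Finset.inf'_le f (mem_adj_s5.2 h)

lemma succMax_le (h : ∀ u, G.E v u → f u ≤ c) : G.succMax f v ≤ c :=
  Finset.sup'_le _ _ fun u hu => h u (mem_adj_s5.1 hu)

lemma le_succMin (h : ∀ u, G.E v u → c ≤ f u) : c ≤ G.succMin f v :=
  Finset.le_inf' _ _ fun u hu => h u (mem_adj_s5.1 hu)

lemma succMin_le_succMax : G.succMin f v ≤ G.succMax f v :=
  (succMin_le (E_someSucc v)).trans (le_succMax (E_someSucc v))

lemma succMax_const_sub (c : ℝ) : G.succMax (fun u => c - f u) v = c - G.succMin f v := by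
  refine le_antisymm (succMax_le fun u hu => by linarith [succMin_le (f := f) hu]) ?_
  rw [← apply_argminSucc_s5]
  exact le_succMax (f := fun u => c - f u) (E_argminSucc f v)

lemma succMin_const_sub (c : ℝ) : G.succMin (fun u => c - f u) v = c - G.succMax f v := by
  have h := succMax_const_sub (G := G) (v := v) (f := fun u => c - f u) c
  simp only [sub_sub_cancel] at h
  linarith

variable (G) (T O : Set V)

/-- Value iteration for the player who wants to reach `T` before `O`; the value at `v` is the
budget he needs there. -/
noncomputable def richmanOp (f : V → ℝ) (v : V) : ℝ :=
  if v ∈ T then 0 else if v ∈ O then 1 else (G.succMax f v + G.succMin f v) / 2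

noncomputable def richmanIter (i : ℕ) : V → ℝ := (G.richmanOp T O)^[i] 1

noncomputable def richmanValue (v : V) : ℝ := ⨅ i, G.richmanIter T O i v

variable {G T O}

lemma richmanOp_of_mem (hv : v ∈ T) : G.richmanOp T O f v = 0 := if_pos hv

lemma richmanOp_of_mem_right (hT : v ∉ T) (hO : v ∈ O) : G.richmanOp T O f v = 1 := by
  rw [richmanOp, if_neg hT, if_pos hO]

lemma richmanOp_of_not_mem (hT : v ∉ T) (hO : v ∉ O) :
    G.richmanOp T O f v = (G.succMax f v + G.succMin f v) / 2 := by
  rw [richmanOp, if_neg hT, if_neg hO]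

lemma richmanOp_mono : Monotone (G.richmanOp T O) := by
  intro f g h v
  unfold richmanOp
  split_ifs
  · rfl
  · rfl
  · linarith [succMax_le (c := G.succMax g v) fun u hu => (h u).trans (le_succMax hu),
      le_succMin (c := G.succMin f v) fun u hu => (succMin_le hu).trans (h u)]

lemma richmanOp_mem_Icc (hf : ∀ u, f u ∈ Set.Icc (0 : ℝ) 1) (v : V) :
    G.richmanOp T O f v ∈ Set.Icc (0 : ℝ) 1 := by
  unfold richmanOp
  split_ifs
  · simp
  · simp
  · have h0 : 0 ≤ G.succMin f v := le_succMin fun u _ => (hf u).1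
    have h1 : G.succMax f v ≤ 1 := succMax_le fun u _ => (hf u).2
    constructor <;> linarith [succMin_le_succMax (G := G) (f := f) (v := v)]

lemma continuous_richmanOp : Continuous (G.richmanOp T O) := by
  refine continuous_pi fun v => ?_
  unfold richmanOp succMax succMin
  split_ifs
  · exact continuous_const
  · exact continuous_const
  · exact ((Continuous.finset_sup'_apply _ fun u _ => continuous_apply u).add
      (Continuous.finset_inf'_apply _ fun u _ => continuous_apply u)).div_const 2

lemma richmanIter_succ (i : ℕ) :
    G.richmanIter T O (i + 1) = G.richmanOp T O (G.richmanIter T O i) :=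
  Function.iterate_succ_apply' _ _ _

lemma richmanIter_mem_Icc (i : ℕ) (v : V) : G.richmanIter T O i v ∈ Set.Icc (0 : ℝ) 1 := by
  induction i generalizing v with
  | zero => simp [richmanIter]
  | succ i ih => rw [richmanIter_succ]; exact richmanOp_mem_Icc ih v

lemma richmanIter_nonneg (i : ℕ) (v : V) : 0 ≤ G.richmanIter T O i v :=
  (richmanIter_mem_Icc i v).1

lemma richmanIter_of_mem_right (hT : v ∉ T) (hO : v ∈ O) (i : ℕ) :
    G.richmanIter T O i v = 1 := by
  cases i with
  | zero => rfl
  | succ i => rw [richmanIter_succ, richmanOp_of_mem_right hT hO]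

lemma richmanIter_antitone : Antitone (G.richmanIter T O) :=
  richmanOp_mono.antitone_iterate_of_map_le fun v => (richmanOp_mem_Icc (by simp) v).2

lemma richmanValue_le_richmanIter (i : ℕ) (v : V) :
    G.richmanValue T O v ≤ G.richmanIter T O i v :=
  ciInf_le ⟨0, by rintro _ ⟨j, rfl⟩; exact richmanIter_nonneg j v⟩ i

lemma richmanValue_nonneg (v : V) : 0 ≤ G.richmanValue T O v :=
  le_ciInf fun i => richmanIter_nonneg i v

lemma richmanValue_le_one (v : V) : G.richmanValue T O v ≤ 1 :=
  richmanValue_le_richmanIter 0 v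

lemma exists_richmanIter_lt {β : ℝ} (h : G.richmanValue T O v < β) :
    ∃ i, G.richmanIter T O i v < β :=
  exists_lt_of_ciInf_lt h

lemma exists_richmanIter_succ_lt {β : ℝ} (h : G.richmanValue T O v < β) :
    ∃ i, G.richmanIter T O (i + 1) v < β := by
  obtain ⟨i, hi⟩ := exists_richmanIter_lt h
  exact ⟨i, (richmanIter_antitone (Nat.le_succ i) v).trans_lt hi⟩

lemma tendsto_richmanIter :
    Tendsto (G.richmanIter T O) atTop (𝓝 (G.richmanValue T O)) :=
  tendsto_pi_nhds.2 fun v => tendsto_atTop_ciInf (fun _ _ h => richmanIter_antitone h v)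
    ⟨0, by rintro _ ⟨j, rfl⟩; exact richmanIter_nonneg j v⟩

lemma isFixedPt_richmanValue : Function.IsFixedPt (G.richmanOp T O) (G.richmanValue T O) := by
  have h : Tendsto (fun i => G.richmanIter T O (i + 1)) atTop
      (𝓝 (G.richmanOp T O (G.richmanValue T O))) := by
    simp only [richmanIter_succ]
    exact ((continuous_richmanOp (G := G)).tendsto _).comp tendsto_richmanIter
  exact tendsto_nhds_unique h ((tendsto_add_atTop_iff_nat 1).2 tendsto_richmanIter)

end RichmanOperator

/-! ### Maximum principle -/

section MaximumPrinciple

variable {V : Type} [Fintype V] {G : BiddingGame V} {T O : Set V} {f g : V → ℝ} {v w y : V}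

lemma richmanOp_eq_of_mem_union (hv : v ∈ T ∪ O) :
    G.richmanOp T O f v = G.richmanOp T O g v := by
  unfold richmanOp
  split_ifs <;> first | rfl | simp_all

lemma eq_avg_of_isFixedPt (hf : Function.IsFixedPt (G.richmanOp T O) f) (hT : v ∉ T)
    (hO : v ∉ O) :
    f v = (G.succMax f v + G.succMin f v) / 2 := by
  rw [← richmanOp_of_not_mem hT hO, hf]

/-- The successor of `w` minimising `g` also realises `M`, so `succMin f w ≥ c = f w`; as `f w`
is the average of `succMax f w` and `succMin f w`, every successor has `f = c`, and then
`f - g = M`. -/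
lemma maxDiff_succ_of_isFixedPt (hf : Function.IsFixedPt (G.richmanOp T O) f)
    (hg : Function.IsFixedPt (G.richmanOp T O) g) {M c : ℝ} (hMpos : 0 < M)
    (hM : ∀ v, f v - g v ≤ M) (hc : ∀ v, f v - g v = M → c ≤ f v)
    (hw : f w - g w = M) (hwc : f w = c) :
    w ∉ T ∪ O ∧ ∀ u, G.E w u → f u - g u = M ∧ f u = c := by
  have hoff : w ∉ T ∪ O := fun hTO => by
    have := richmanOp_eq_of_mem_union (G := G) (f := f) (g := g) hTO
    rw [hf, hg] at this
    linarith
  refine ⟨hoff, ?_⟩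
  obtain ⟨hT, hO⟩ := not_or.1 hoff
  have hfw := eq_avg_of_isFixedPt hf hT hO
  have hgw := eq_avg_of_isFixedPt hg hT hO
  set u₀ := G.argminSucc_s5 g w
  have hu₀ : g u₀ = G.succMin g w := apply_argminSucc_s5 g w
  have hmax : G.succMax f w ≤ G.succMax g w + M :=
    succMax_le fun u hu => by linarith [hM u, le_succMax (f := g) hu]
  have hmin : G.succMin f w ≤ f u₀ := succMin_le (E_argminSucc g w)
  have hminf : f u₀ = G.succMin f w := by linarith [hM u₀]
  have hcu₀ : c ≤ f u₀ := hc u₀ (by linarith [hM u₀])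
  have hminmax := succMin_le_succMax (G := G) (f := f) (v := w)
  intro u hu
  have hfu : f u = c := by linarith [le_succMax (f := f) hu, succMin_le (f := f) hu]
  exact ⟨by linarith [hM u, hM u₀, le_succMax (f := g) hu], hfu⟩

/-- Among the maximisers of `f - g`, those minimising `f` form a closed set, which contains a
BSCC vertex. -/
lemma le_of_isFixedPt_richmanOp (hcov : ∀ x, InBSCC G x → x ∈ T ∪ O)
    (hf : Function.IsFixedPt (G.richmanOp T O) f) (hg : Function.IsFixedPt (G.richmanOp T O) g) :
    f ≤ g := by
  intro v₀
  by_contra! hv₀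
  obtain ⟨w₀, -, hw₀⟩ :=
    Finset.univ.exists_max_image (fun v => f v - g v) ⟨v₀, Finset.mem_univ v₀⟩
  have hM : ∀ v, f v - g v ≤ f w₀ - g w₀ := fun v => hw₀ v (Finset.mem_univ v)
  obtain ⟨z₀, hz₀, hmin⟩ :=
    (Finset.univ.filter fun v => f v - g v = f w₀ - g w₀).exists_min_image f ⟨w₀, by simp⟩
  let Z : Set V := {w | f w - g w = f w₀ - g w₀ ∧ f w = f z₀}
  have hZ : ∀ w ∈ Z, w ∉ T ∪ O ∧ ∀ u, G.E w u → u ∈ Z := fun w hw =>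
    maxDiff_succ_of_isFixedPt hf hg (by linarith [hM v₀]) hM
      (fun v hv => hmin v (by simpa using hv)) hw.1 hw.2
  obtain ⟨y, hy, hyB⟩ := G.exists_reach_inBSCC z₀
  have hyZ : y ∈ Z :=
    ForwardClosed.mem_of_reach (fun w hw => (hZ w hw).2) ⟨by simpa using hz₀, rfl⟩ hy
  exact (hZ y hyZ).1 (hcov y hyB)

lemma richmanValue_swap (hdisj : Disjoint T O) (hcov : ∀ x, InBSCC G x → x ∈ T ∪ O)
    (v : V) :
    G.richmanValue O T v = 1 - G.richmanValue T O v := by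
  have hfix : Function.IsFixedPt (G.richmanOp T O) (1 - G.richmanValue O T) := by
    funext v
    have hv := congrFun (isFixedPt_richmanValue (G := G) (T := O) (O := T)) v
    simp only [Pi.sub_apply, Pi.one_apply]
    by_cases hT : v ∈ T
    · rw [richmanOp_of_mem hT, ← hv, richmanOp_of_mem_right (hdisj.notMem_of_mem_left hT) hT]
      ring
    by_cases hO : v ∈ O
    · rw [richmanOp_of_mem_right hT hO, ← hv, richmanOp_of_mem hO]
      ring
    rw [richmanOp_of_not_mem hT hO, ← hv, richmanOp_of_not_mem hO hT]
    change (G.succMax (fun u => 1 - G.richmanValue O T u) v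
      + G.succMin (fun u => 1 - G.richmanValue O T u) v) / 2 = _
    rw [succMax_const_sub, succMin_const_sub]
    ring
  have h := le_antisymm (le_of_isFixedPt_richmanOp hcov hfix isFixedPt_richmanValue)
    (le_of_isFixedPt_richmanOp hcov isFixedPt_richmanValue hfix)
  rw [← congrFun h v, Pi.sub_apply, Pi.one_apply]
  ring

lemma richmanValue_of_mem (hv : v ∈ T) : G.richmanValue T O v = 0 :=
  (congrFun isFixedPt_richmanValue v).symm.trans (richmanOp_of_mem hv)

/-- The maximisers of the value over the BSCC form a closed set, which therefore meets `T`,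
where the value is `0`. -/
lemma richmanValue_eq_zero_of_inBSCC (hy : InBSCC G y) (hT : ∃ z ∈ T, ReflTransGen G.E y z) :
    G.richmanValue T ∅ y = 0 := by
  set f := G.richmanValue T ∅
  obtain ⟨w₀, hw₀, hmax⟩ := (G.reachSet y).exists_max_image f ⟨y, mem_reachSet.2 .refl⟩
  refine le_antisymm ?_ (richmanValue_nonneg y)
  by_contra! hpos
  have hcpos : 0 < f w₀ := hpos.trans_le (hmax y (mem_reachSet.2 .refl))
  let Z : Set V := {w | ReflTransGen G.E y w ∧ f w = f w₀}
  have hZ : G.ForwardClosed Z := by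
    rintro w ⟨hyw, hw⟩ u hu
    have hwT : w ∉ T := fun hwT => by linarith [richmanValue_of_mem (G := G) (O := ∅) hwT]
    have havg := eq_avg_of_isFixedPt (G := G) isFixedPt_richmanValue hwT (Set.notMem_empty w)
    have hle : ∀ u, G.E w u → f u ≤ f w₀ :=
      fun u hu => hmax u (mem_reachSet.2 (hyw.tail hu))
    refine ⟨hyw.tail hu, le_antisymm (hle u hu) ?_⟩
    linarith [succMax_le hle, succMin_le (f := f) hu]
  obtain ⟨z, hzT, hyz⟩ := hT
  have hzZ : z ∈ Z :=
    hZ.mem_of_reach ⟨mem_reachSet.1 hw₀, rfl⟩ ((hy _ (mem_reachSet.1 hw₀)).trans hyz)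
  linarith [hzZ.2, richmanValue_of_mem (G := G) (O := ∅) hzT]

end MaximumPrinciple

/-! ### Pursuit strategies -/

section Pursuit

variable {V : Type} [Fintype V] (G : BiddingGame V)

/-- With this bid the value `W` of the token stays below the budget whoever wins the bidding:
winning costs exactly what losing would gain. -/
noncomputable def richmanBid (W : V → ℝ) (x : V) : ℝ := (G.succMax W x - G.succMin W x) / 2

/-- Taking the least admissible `i` makes it decrease along the play, which bounds the time
needed to reach `T`. -/
noncomputable def pursuitAct (T O : Set V) (x : V) (β : ℝ) : ℝ × V :=
  if x ∈ T ∨ x ∈ O then (0, G.someSucc x)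
  else if h : ∃ i, G.richmanIter T O (i + 1) x < β then
    (G.richmanBid (G.richmanIter T O (Nat.find h)) x,
      G.argminSucc_s5 (G.richmanIter T O (Nat.find h)) x)
  else (0, G.someSucc x)

/-- Reach `A` avoiding `Bs`; once in `A`, keep visiting the vertices of maximal parity index
of the current BSCC. -/
noncomputable def parityAct (p : V → ℕ) (A Bs : Set V) (x : V) (β : ℝ) : ℝ × V :=
  if x ∈ A then G.pursuitAct {z | p z = bsccMaxIndex G p x} ∅ x β else G.pursuitAct A Bs x β

def IsBudgetAct (act : V → ℝ → ℝ × V) : Prop :=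
  ∀ x β, G.E x (act x β).2 ∧ (0 ≤ β → 0 ≤ (act x β).1 ∧ (act x β).1 ≤ β)

/-- The vertices `x n` and budgets `β n` along a play in which a player uses `act` against a
legal opponent: the second alternative of `step` is a lost bidding, the opponent's bid being at
least the player's. -/
structure FollowsAct (act : V → ℝ → ℝ × V) (x : ℕ → V) (β : ℕ → ℝ) : Prop where
  le_one : ∀ n, β n ≤ 1
  edge : ∀ n, G.E (x n) (x (n + 1))
  step : ∀ n, (x (n + 1) = (act (x n) (β n)).2 ∧ β (n + 1) = β n - (act (x n) (β n)).1) ∨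
    β n + (act (x n) (β n)).1 ≤ β (n + 1)

variable {G} {T O : Set V}

lemma pursuitAct_of_mem {x : V} {β : ℝ} (hx : x ∈ T) : (G.pursuitAct T O x β).1 = 0 := by
  simp [pursuitAct, hx]

lemma isBudgetAct_pursuitAct : G.IsBudgetAct (G.pursuitAct T O) := by
  intro x β
  unfold pursuitAct
  split_ifs with hTO hex
  · exact ⟨E_someSucc x, fun hβ => ⟨le_rfl, hβ⟩⟩
  · refine ⟨E_argminSucc _ x, fun _ => ?_⟩
    obtain ⟨hT, hO⟩ := not_or.1 hTO
    have hlt := Nat.find_spec hex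
    rw [richmanIter_succ, richmanOp_of_not_mem hT hO] at hlt
    have h0 : 0 ≤ G.succMin (G.richmanIter T O (Nat.find hex)) x :=
      le_succMin fun u _ => richmanIter_nonneg _ u
    unfold richmanBid
    constructor <;> linarith [succMin_le_succMax (G := G)
      (f := G.richmanIter T O (Nat.find hex)) (v := x)]
  · exact ⟨E_someSucc x, fun hβ => ⟨le_rfl, hβ⟩⟩

lemma isBudgetAct_parityAct (p : V → ℕ) (A Bs : Set V) :
    G.IsBudgetAct (G.parityAct p A Bs) := by
  intro x β
  unfold parityAct
  split_ifs
  · exact isBudgetAct_pursuitAct x β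
  · exact isBudgetAct_pursuitAct x β

namespace FollowsAct

variable {act : V → ℝ → ℝ × V} {x : ℕ → V} {β : ℕ → ℝ}

lemma shift (h : G.FollowsAct act x β) (k : ℕ) :
    G.FollowsAct act (fun n => x (k + n)) (fun n => β (k + n)) :=
  ⟨fun _ => h.le_one _, fun _ => h.edge _, fun _ => h.step _⟩

lemma mem_of_forwardClosed (h : G.FollowsAct act x β) {I : Set V} (hI : G.ForwardClosed I)
    (hx : x 0 ∈ I) (n : ℕ) : x n ∈ I := by
  induction n with
  | zero => exact hx
  | succ n ih => exact hI _ ih _ (h.edge n)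

lemma le_succ_of_bid_eq_zero (h : G.FollowsAct act x β) {n : ℕ}
    (hbid : (act (x n) (β n)).1 = 0) : β n ≤ β (n + 1) := by
  rcases h.step n with ⟨-, hβ⟩ | hβ <;> linarith

lemma lt_of_richmanBid (h : G.FollowsAct act x β) {n : ℕ} {W : V → ℝ}
    (hact : act (x n) (β n) = (G.richmanBid W (x n), G.argminSucc_s5 W (x n)))
    (hlt : (G.succMax W (x n) + G.succMin W (x n)) / 2 < β n) : W (x (n + 1)) < β (n + 1) := by
  have hstep := h.step n
  rw [hact] at hstep
  unfold richmanBid at hstep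
  rcases hstep with ⟨hx, hβ⟩ | hβ
  · rw [hx, hβ, apply_argminSucc_s5 W]
    linarith
  · linarith [le_succMax (f := W) (h.edge n)]

lemma not_mem_of_richmanIter_lt (h : G.FollowsAct act x β) {n k : ℕ} (hT : x n ∉ T)
    (hk : G.richmanIter T O k (x n) < β n) : x n ∉ O := fun hO => by
  rw [richmanIter_of_mem_right hT hO] at hk
  linarith [h.le_one n]

lemma pursuitAct_step (h : G.FollowsAct act x β) {n k : ℕ}
    (hact : act (x n) (β n) = G.pursuitAct T O (x n) (β n)) (hT : x n ∉ T)
    (hk : G.richmanIter T O (k + 1) (x n) < β n) :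
    ∃ k' ≤ k, G.richmanIter T O k' (x (n + 1)) < β (n + 1) := by
  have hO := h.not_mem_of_richmanIter_lt hT hk
  have hex : ∃ i, G.richmanIter T O (i + 1) (x n) < β n := ⟨k, hk⟩
  refine ⟨Nat.find hex, Nat.find_min' hex hk, h.lt_of_richmanBid ?_ ?_⟩
  · rw [hact, pursuitAct, if_neg (not_or.2 ⟨hT, hO⟩), dif_pos hex]
  · have := Nat.find_spec hex
    rwa [richmanIter_succ, richmanOp_of_not_mem hT hO] at this

variable {I : Set V}

lemma exists_reach (hI : G.ForwardClosed I)
    (hact : ∀ y ∈ I, y ∉ T → ∀ b, act y b = G.pursuitAct T O y b) (k : ℕ)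
    (h : G.FollowsAct act x β) (hx : x 0 ∈ I) (hk : G.richmanIter T O k (x 0) < β 0) :
    ∃ j, x j ∈ T ∧ (∀ m < j, x m ∉ O) ∧ 0 < β j := by
  induction k using Nat.strong_induction_on generalizing x β with
  | _ k ih =>
  by_cases hT : x 0 ∈ T
  · exact ⟨0, hT, by simp, (richmanIter_nonneg k _).trans_lt hk⟩
  have hO := h.not_mem_of_richmanIter_lt hT hk
  obtain _ | k := k
  · exact absurd (h.le_one 0) (by simpa [richmanIter] using hk)
  obtain ⟨k', hk', hlt⟩ := h.pursuitAct_step (hact _ hx hT _) hT hk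
  obtain ⟨j, hjT, hjO, hjβ⟩ := ih k' (by omega) (h.shift 1) (hI _ hx _ (h.edge 0)) hlt
  refine ⟨1 + j, hjT, fun m hm => ?_, hjβ⟩
  rcases m with _ | m
  · exact hO
  · rw [Nat.add_comm]
    exact hjO m (by omega)

lemma frequently_mem (hI : G.ForwardClosed I)
    (hact : ∀ y ∈ I, ∀ b, act y b = G.pursuitAct T ∅ y b)
    (hval : ∀ y ∈ I, G.richmanValue T ∅ y = 0) (h : G.FollowsAct act x β) (hx : x 0 ∈ I)
    (hβ : 0 < β 0) (N : ℕ) : ∃ n ≥ N, x n ∈ T := by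
  have hxI := h.mem_of_forwardClosed hI hx
  have hpos : ∀ n, 0 < β n := by
    intro n
    induction n with
    | zero => exact hβ
    | succ n ih =>
      by_cases hT : x n ∈ T
      · refine ih.trans_le (h.le_succ_of_bid_eq_zero ?_)
        rw [hact _ (hxI n)]
        exact pursuitAct_of_mem hT
      · obtain ⟨k, hk⟩ := exists_richmanIter_succ_lt (hval _ (hxI n) ▸ ih)
        obtain ⟨k', -, hk'⟩ := h.pursuitAct_step (hact _ (hxI n) _) hT hk
        exact (richmanIter_nonneg _ _).trans_lt hk'
  obtain ⟨k, hk⟩ := exists_richmanIter_lt (hval _ (hxI N) ▸ hpos N)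
  obtain ⟨j, hj, -⟩ := (h.shift N).exists_reach hI (fun y hy _ => hact y hy) k (hxI N) hk
  exact ⟨N + j, Nat.le_add_right N j, hj⟩

lemma parityAct_wins {p : V → ℕ} {A Bs : Set V} (hA : ∀ y ∈ A, InBSCC G y)
    (hAcl : G.ForwardClosed A) (h : G.FollowsAct (G.parityAct p A Bs) x β)
    (h0 : G.richmanValue A Bs (x 0) < β 0) :
    ∃ j, x j ∈ A ∧ (∀ m < j, x m ∉ Bs) ∧
      sSup {k | ∀ N, ∃ n ≥ N, p (x n) = k} = bsccMaxIndex G p (x j) := by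
  obtain ⟨k, hk⟩ := exists_richmanIter_lt h0
  obtain ⟨j, hjA, hjBs, hjβ⟩ := h.exists_reach (I := Set.univ) (fun _ _ _ _ => trivial)
    (fun _ _ hy _ => if_neg hy) k trivial hk
  refine ⟨j, hjA, hjBs, ?_⟩
  set K := bsccMaxIndex G p (x j)
  have hI : G.ForwardClosed {y | y ∈ A ∧ bsccMaxIndex G p y = K} := fun y hy z hz =>
    ⟨hAcl y hy.1 z hz, ((hA y hy.1).bsccMaxIndex_eq p (.single hz)).trans hy.2⟩
  have hfreq := (h.shift j).frequently_mem (T := {z | p z = K}) hI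
    (fun y hy b => by rw [parityAct, if_pos hy.1, hy.2])
    (fun y hy => richmanValue_eq_zero_of_inBSCC (hA y hy.1) (by
      obtain ⟨z, hz, hpz⟩ := exists_reach_eq_bsccMaxIndex (G := G) p y
      exact ⟨z, hpz.trans hy.2, hz⟩))
    ⟨hjA, rfl⟩ hjβ
  have hreach := (h.shift j).mem_of_forwardClosed (I := {z | ReflTransGen G.E (x j) z})
    (fun _ hy _ hz => hy.tail hz) ReflTransGen.refl
  refine sSup_setOf_frequently_eq (j := j) (fun n hn => ?_) fun N => ?_
  · obtain ⟨m, rfl⟩ := Nat.exists_eq_add_of_le hn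
    exact le_bsccMaxIndex p (hreach m)
  · obtain ⟨n, hn, hnK⟩ := hfreq N
    exact ⟨j + n, by omega, hnK⟩

end FollowsAct

end Pursuit

/-! ### Strategies driven by the budget -/

section Strategies

variable {V : Type}

lemma extend_cases (tb : TieBreak V) (f1 f2 : Strat V) (h : Hist V) :
    ((extend tb f1 f2 h).cur = (f1 h).2 ∧ (extend tb f1 f2 h).pay1 = h.pay1 + (f1 h).1 ∧
        (f2 h).1 ≤ (f1 h).1) ∨
      ((extend tb f1 f2 h).cur = (f2 h).2 ∧ (extend tb f1 f2 h).pay1 = h.pay1 - (f2 h).1 ∧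
        (f1 h).1 ≤ (f2 h).1) := by
  unfold extend
  split_ifs with hw
  · refine .inl ⟨by simp [Hist.cur], by simp [Hist.pay1], ?_⟩
    rcases hw with hw | hw
    exacts [hw.le, hw.1.ge]
  · refine .inr ⟨by simp [Hist.cur], by simp [Hist.pay1, sub_eq_add_neg], ?_⟩
    push Not at hw
    exact hw.1

lemma visit_zero (tb : TieBreak V) (f1 f2 : Strat V) (v : V) : visit tb f1 f2 v 0 = v := rfl

lemma pay1_play_zero (tb : TieBreak V) (f1 f2 : Strat V) (v : V) :
    (play tb f1 f2 v 0).pay1 = 0 := by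
  simp [play, Hist.pay1]

def budgetStrat1 (act : V → ℝ → ℝ × V) (B : ℝ) : Strat V :=
  fun h => act h.cur (B - h.pay1)

def budgetStrat2 (act : V → ℝ → ℝ × V) (B : ℝ) : Strat V :=
  fun h => act h.cur (B - h.pay2)

variable [Fintype V] {G : BiddingGame V} {act : V → ℝ → ℝ × V} {B : ℝ}

lemma legal1_budgetStrat1 (hact : G.IsBudgetAct act) (hB : 0 ≤ B) :
    Legal1 G (budgetStrat1 act B) B := by
  intro tb f2 v n
  have hβ : 0 ≤ B - (play tb (budgetStrat1 act B) f2 v n).pay1 := by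
    induction n with
    | zero => simpa [pay1_play_zero] using hB
    | succ n ih =>
      have hbid := (hact (play tb (budgetStrat1 act B) f2 v n).cur _).2 ih
      simp only [play]
      rcases extend_cases tb (budgetStrat1 act B) f2 (play tb (budgetStrat1 act B) f2 v n) with
        ⟨-, hpay, -⟩ | ⟨-, hpay, hle⟩ <;>
      · simp only [budgetStrat1] at *
        linarith
  exact ⟨((hact _ _).2 hβ).1, ((hact _ _).2 hβ).2, (hact _ _).1⟩

lemma legal2_budgetStrat2 (hact : G.IsBudgetAct act) (hB : 0 ≤ B) :
    Legal2 G (budgetStrat2 act B) B := by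
  intro tb f1 v n
  have hβ : 0 ≤ B - (play tb f1 (budgetStrat2 act B) v n).pay2 := by
    induction n with
    | zero => simpa [Hist.pay2, pay1_play_zero] using hB
    | succ n ih =>
      have hbid := (hact (play tb f1 (budgetStrat2 act B) v n).cur _).2 ih
      simp only [play]
      rcases extend_cases tb f1 (budgetStrat2 act B) (play tb f1 (budgetStrat2 act B) v n) with
        ⟨-, hpay, hle⟩ | ⟨-, hpay, -⟩ <;>
      · simp only [budgetStrat2, Hist.pay2] at *
        linarith
  exact ⟨((hact _ _).2 hβ).1, ((hact _ _).2 hβ).2, (hact _ _).1⟩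

lemma followsAct_budgetStrat1 (hact : G.IsBudgetAct act) {tb : TieBreak V} {f2 : Strat V}
    (hf2 : Legal2 G f2 (1 - B)) (v : V) :
    G.FollowsAct act (visit tb (budgetStrat1 act B) f2 v)
      (fun n => B - (play tb (budgetStrat1 act B) f2 v n).pay1) := by
  refine ⟨fun n => ?_, fun n => ?_, fun n => ?_⟩
  · obtain ⟨h0, hle, -⟩ := hf2 tb (budgetStrat1 act B) v n
    simp only [Hist.pay2] at hle
    linarith
  all_goals
    simp only [visit, play]
    rcases extend_cases tb (budgetStrat1 act B) f2 (play tb (budgetStrat1 act B) f2 v n) with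
      ⟨hcur, hpay, -⟩ | ⟨hcur, hpay, hle⟩
  · exact hcur ▸ (hact _ _).1
  · exact hcur ▸ (hf2 tb _ v n).2.2
  · exact .inl ⟨hcur, by simp only [budgetStrat1] at hpay ⊢; linarith⟩
  · exact .inr (by simp only [budgetStrat1] at hpay hle ⊢; linarith)

lemma followsAct_budgetStrat2 (hact : G.IsBudgetAct act) {tb : TieBreak V} {f1 : Strat V}
    (hf1 : Legal1 G f1 (1 - B)) (v : V) :
    G.FollowsAct act (visit tb f1 (budgetStrat2 act B) v)
      (fun n => B - (play tb f1 (budgetStrat2 act B) v n).pay2) := by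
  refine ⟨fun n => ?_, fun n => ?_, fun n => ?_⟩
  · obtain ⟨h0, hle, -⟩ := hf1 tb (budgetStrat2 act B) v n
    simp only [Hist.pay2]
    linarith
  all_goals
    simp only [visit, play]
    rcases extend_cases tb f1 (budgetStrat2 act B) (play tb f1 (budgetStrat2 act B) v n) with
      ⟨hcur, hpay, hle⟩ | ⟨hcur, hpay, -⟩
  · exact hcur ▸ (hf1 tb _ v n).2.2
  · exact hcur ▸ (hact _ _).1
  · exact .inr (by simp only [budgetStrat2, Hist.pay2] at hpay hle ⊢; linarith)
  · exact .inl ⟨hcur, by simp only [budgetStrat2, Hist.pay2] at hpay ⊢; linarith⟩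

end Strategies

section Thresholds

variable {V : Type}

lemma not_win1RichmanSet_and_win2 {R S : Set V} (hRS : Disjoint R S) {tb : TieBreak V}
    {f1 f2 : Strat V} {v : V} (h1 : Win1RichmanSet tb f1 f2 v R S)
    (h2 : Win2RichmanSet tb f1 f2 v R S) : False := by
  obtain ⟨n, hnR, hnS⟩ := h1
  rcases h2 with ⟨m, hmS, hmR⟩ | hnone
  · rcases lt_trichotomy n m with hlt | rfl | hlt
    · exact hmR n hlt hnR
    · exact hRS.notMem_of_mem_left hnR hmS
    · exact hnS m hlt hmS
  · exact (hnone n).1 hnR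

variable [Fintype V] (G : BiddingGame V)

def Wins1 (W : TieBreak V → Strat V → Strat V → Prop) (B : ℝ) : Prop :=
  ∀ tb, ∃ f1, Legal1 G f1 B ∧ ∀ f2, Legal2 G f2 (1 - B) → W tb f1 f2

def Wins2 (W : TieBreak V → Strat V → Strat V → Prop) (B : ℝ) : Prop :=
  ∀ tb, ∃ f2, Legal2 G f2 B ∧ ∀ f1, Legal1 G f1 (1 - B) → W tb f1 f2

variable {G} {W W' : TieBreak V → Strat V → Strat V → Prop} {B : ℝ}

lemma Wins1.mono (h : Wins1 G W B) (hW : ∀ tb f1 f2, W tb f1 f2 → W' tb f1 f2) :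
    Wins1 G W' B := fun tb =>
  let ⟨f1, hf1, hw⟩ := h tb
  ⟨f1, hf1, fun f2 hf2 => hW _ _ _ (hw f2 hf2)⟩

lemma Wins2.mono (h : Wins2 G W B) (hW : ∀ tb f1 f2, W tb f1 f2 → W' tb f1 f2) :
    Wins2 G W' B := fun tb =>
  let ⟨f2, hf2, hw⟩ := h tb
  ⟨f2, hf2, fun f1 hf1 => hW _ _ _ (hw f1 hf1)⟩

lemma not_wins1_and_wins2 (hW : ∀ tb f1 f2, W tb f1 f2 → W' tb f1 f2 → False)
    (h1 : Wins1 G W B) (h2 : Wins2 G W' (1 - B)) : False := by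
  obtain ⟨f1, hf1, hw1⟩ := h1 fun _ => false
  obtain ⟨f2, hf2, hw2⟩ := h2 fun _ => false
  exact hW _ _ _ (hw1 f2 hf2) (hw2 f1 (by rwa [sub_sub_cancel]))

end Thresholds

section ParityGame

variable {V : Type} [Fintype V] (G : BiddingGame V) (p : V → ℕ)

def oddBSCCs : Set V := {x | InBSCC G x ∧ Odd (bsccMaxIndex G p x)}

def evenBSCCs : Set V := {x | InBSCC G x ∧ ¬ Odd (bsccMaxIndex G p x)}

variable {G p}

lemma disjoint_oddBSCCs_evenBSCCs : Disjoint (oddBSCCs G p) (evenBSCCs G p) :=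
  Set.disjoint_left.2 fun _ hodd heven => heven.2 hodd.2

lemma forwardClosed_oddBSCCs : G.ForwardClosed (oddBSCCs G p) :=
  forwardClosed_setOf_inBSCC p Odd

lemma forwardClosed_evenBSCCs : G.ForwardClosed (evenBSCCs G p) :=
  forwardClosed_setOf_inBSCC p (¬ Odd ·)

lemma mem_union_of_inBSCC {x : V} (hx : InBSCC G x) : x ∈ oddBSCCs G p ∪ evenBSCCs G p := by
  by_cases h : Odd (bsccMaxIndex G p x)
  exacts [.inl ⟨hx, h⟩, .inr ⟨hx, h⟩]

lemma wins1_of_richmanValue_lt {v : V} {B : ℝ}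
    (hB : G.richmanValue (oddBSCCs G p) (evenBSCCs G p) v < B) :
    Wins1 G (fun tb f1 f2 => Win1RichmanSet tb f1 f2 v (oddBSCCs G p) (evenBSCCs G p) ∧
      Win1Parity p tb f1 f2 v) B := by
  intro tb
  have hact := G.isBudgetAct_parityAct p (oddBSCCs G p) (evenBSCCs G p)
  refine ⟨_, legal1_budgetStrat1 hact ((richmanValue_nonneg v).trans hB.le), fun f2 hf2 => ?_⟩
  obtain ⟨j, hj, hjS, hsup⟩ := (followsAct_budgetStrat1 hact hf2 v (tb := tb)).parityAct_wins
    (fun _ hy => hy.1) forwardClosed_oddBSCCs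
    (by simpa only [visit_zero, pay1_play_zero, sub_zero] using hB)
  exact ⟨⟨j, hj, hjS⟩, by rw [Win1Parity, hsup]; exact hj.2⟩

lemma wins2_of_richmanValue_lt {v : V} {B : ℝ}
    (hB : 1 - G.richmanValue (oddBSCCs G p) (evenBSCCs G p) v < B) :
    Wins2 G (fun tb f1 f2 => Win2RichmanSet tb f1 f2 v (oddBSCCs G p) (evenBSCCs G p) ∧
      ¬ Win1Parity p tb f1 f2 v) B := by
  intro tb
  rw [← richmanValue_swap disjoint_oddBSCCs_evenBSCCs (fun _ => mem_union_of_inBSCC) v] at hB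
  have hact := G.isBudgetAct_parityAct p (evenBSCCs G p) (oddBSCCs G p)
  refine ⟨_, legal2_budgetStrat2 hact ((richmanValue_nonneg v).trans hB.le), fun f1 hf1 => ?_⟩
  obtain ⟨j, hj, hjR, hsup⟩ := (followsAct_budgetStrat2 hact hf1 v (tb := tb)).parityAct_wins
    (fun _ hy => hy.1) forwardClosed_evenBSCCs
    (by simpa only [visit_zero, Hist.pay2, pay1_play_zero, neg_zero, sub_zero] using hB)
  exact ⟨.inl ⟨j, hj, hjR⟩, by rw [Win1Parity, hsup]; exact hj.2⟩

end ParityGame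

end BiddingGame

open BiddingGame

theorem parity_thresholds_eq_richman_thresholds_general
    {V : Type} [Fintype V] (G : BiddingGame V) (p : V → ℕ) (v : V) (t : ℝ) :
    IsThreshParity G p v t ↔
      IsThreshRichmanSet G
        {x | InBSCC G x ∧ Odd (bsccMaxIndex G p x)}
        {x | InBSCC G x ∧ ¬ Odd (bsccMaxIndex G p x)} v t := by
  have hθ0 := richmanValue_nonneg (G := G) (T := oddBSCCs G p) (O := evenBSCCs G p) v
  have hθ1 := richmanValue_le_one (G := G) (T := oddBSCCs G p) (O := evenBSCCs G p) v
  have hparity : IsThreshParity G p v t ↔ _ :=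
    isThreshold_iff_eq (fun B hB => (wins1_of_richmanValue_lt hB).mono fun _ _ _ => And.right)
      (fun B hB => (wins2_of_richmanValue_lt hB).mono fun _ _ _ => And.right)
      (fun B => not_wins1_and_wins2 fun _ _ _ h h' => h' h) hθ0 hθ1
  have hrichman : IsThreshRichmanSet G (oddBSCCs G p) (evenBSCCs G p) v t ↔ _ :=
    isThreshold_iff_eq (fun B hB => (wins1_of_richmanValue_lt hB).mono fun _ _ _ => And.left)
      (fun B hB => (wins2_of_richmanValue_lt hB).mono fun _ _ _ => And.left)
      (fun B => not_wins1_and_wins2 fun _ _ _ => not_win1RichmanSet_and_win2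
        disjoint_oddBSCCs_evenBSCCs) hθ0 hθ1
  exact hparity.trans hrichman.symm

/-- The threshold budgets of a parity bidding game coincide with the
threshold budgets of the Richman game (on the same arena) whose Player 1 target set is
the union of the BSCCs with odd maximal parity index and whose Player 2 target set is
the union of the BSCCs with even maximal parity index. -/
theorem parity_thresholds_eq_richman_thresholds
    {V : Type} [Fintype V] (G : BiddingGame V) (p : V → ℕ) (v : V) (t : ℝ)
    (ht0 : 0 ≤ t) (ht1 : t ≤ 1) :
    IsThreshParity G p v t ↔
      IsThreshRichmanSet G
        {x | InBSCC G x ∧ Odd (bsccMaxIndex G p x)}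
        {x | InBSCC G x ∧ ¬ Odd (bsccMaxIndex G p x)} v t :=
  parity_thresholds_eq_richman_thresholds_general G p v t
end
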